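/- arXiv:1004.2265 — 2 statements merged into one kernel-verified Lean document; each statement's English description precedes it below -/
import Mathlib

section
/- The measure μ̂_G with density 1/(u-v)² on the domain D is invariant under the natural extension Ĝ of the octagon Gauss map: the pushforward of μ̂_G under Ĝ equals μ̂_G. -/
open MeasureTheory Set

noncomputable section

/-- The linear fractional transformation of `ℝ` induced by a 2×2 real matrix,
with the convention that the value is `0` when the denominator vanishes. -/
def mob (M : Matrix (Fin 2) (Fin 2) ℝ) (u : ℝ) : ℝ :=
  (M 0 0 * u + M 0 1) / (M 1 0 * u + M 1 1)

/-- The matrix `γ = [[-1, 2+2√2],[0,1]]`. -/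
def gam : Matrix (Fin 2) (Fin 2) ℝ := !![-1, 2 + 2 * Real.sqrt 2; 0, 1]

/-- The isometries `ν₁, …, ν₇` of the octagon. -/
def nu : ℕ → Matrix (Fin 2) (Fin 2) ℝ
  | 1 => (Real.sqrt 2)⁻¹ • !![1, 1; 1, -1]
  | 2 => (Real.sqrt 2)⁻¹ • !![1, 1; -1, 1]
  | 3 => !![0, 1; 1, 0]
  | 4 => !![0, 1; -1, 0]
  | 5 => (Real.sqrt 2)⁻¹ • !![-1, 1; 1, 1]
  | 6 => (Real.sqrt 2)⁻¹ • !![-1, 1; -1, -1]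
  | 7 => !![-1, 0; 0, 1]
  | _ => 1

/-- The index `i` of the sector `Σᵢ` (in inverse-slope coordinates) containing `u`:
`Σ₀ = (1+√2, ∞)`, `Σ₁ = (1, 1+√2]`, `Σ₂ = (√2-1, 1]`, `Σ₃ = (0, √2-1]`, `Σ₄ = (1-√2, 0]`,
`Σ₅ = (-1, 1-√2]`, `Σ₆ = (-1-√2, -1]`, `Σ₇ = (-∞, -1-√2]`. -/
def sectorIndex (u : ℝ) : ℕ :=
  if 1 + Real.sqrt 2 < u then 0
  else if 1 < u then 1
  else if Real.sqrt 2 - 1 < u then 2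
  else if 0 < u then 3
  else if 1 - Real.sqrt 2 < u then 4
  else if -1 < u then 5
  else if -(1 + Real.sqrt 2) < u then 6
  else 7

/-- The octagon Farey map in inverse-slope coordinates: `F(u) = (γ·νᵢ)[u]` for `u ∈ Σᵢ`
(`i = 1,…,7`), and `F(u) = u` for `u ∈ Σ₀`. -/
def F (u : ℝ) : ℝ :=
  if sectorIndex u = 0 then u else mob (gam * nu (sectorIndex u)) u

/-- For `u ∈ Σ₁`: the least `n ≥ 1` with `Fⁿ(u) ∉ Σ₁` if such `n` exists, `0` otherwise. -/
def n1 (u : ℝ) : ℕ := sInf {n | 0 < n ∧ F^[n] u ∉ Set.Ioc (1 : ℝ) (1 + Real.sqrt 2)}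

/-- For `u ∈ Σ₇`: the least `n ≥ 1` with `Fⁿ(u) ∉ Σ₇` if such `n` exists, `0` otherwise. -/
def n7 (u : ℝ) : ℕ := sInf {n | 0 < n ∧ F^[n] u ∉ Set.Iic (-(1 + Real.sqrt 2))}

open Classical in
/-- The octagon Gauss map: `G(u) = F^{n₁(u)}(u)` on `Σ₁`, `G(u) = F^{n₇(u)}(u)` on `Σ₇`,
`G(u) = F(u)` on `Σ₂ ∪ ⋯ ∪ Σ₆`, and `G(u) = u` on `Σ₀`. -/
def G (u : ℝ) : ℝ :=
  if u ∈ Set.Ioc (1 : ℝ) (1 + Real.sqrt 2) then F^[n1 u] u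
  else if u ∈ Set.Iic (-(1 + Real.sqrt 2)) then F^[n7 u] u
  else if u ≤ 1 + Real.sqrt 2 then F u
  else u

/-- The natural extension of the octagon Farey map. -/
def Fhat (p : ℝ × ℝ) : ℝ × ℝ :=
  if sectorIndex p.1 = 0 then p
  else (mob (gam * nu (sectorIndex p.1)) p.1, mob (gam * nu (sectorIndex p.1)) p.2)

open Classical in
/-- The return time `n(u)`: `n₁(u)` on `Σ₁`, `n₇(u)` on `Σ₇`, `1` on `Σ₂ ∪ ⋯ ∪ Σ₆`,
`0` on `Σ₀`. -/
def nG (u : ℝ) : ℕ :=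
  if u ∈ Set.Ioc (1 : ℝ) (1 + Real.sqrt 2) then n1 u
  else if u ∈ Set.Iic (-(1 + Real.sqrt 2)) then n7 u
  else if u ≤ 1 + Real.sqrt 2 then 1
  else 0

/-- The natural extension of the octagon Gauss map: `Ĝ(u,v) = F̂^{n(u)}(u,v)`. -/
def Ghat (p : ℝ × ℝ) : ℝ × ℝ := Fhat^[nG p.1] p

/-- The domain `D` of the natural extension of the octagon Gauss map. -/
def Dgauss : Set (ℝ × ℝ) :=
  (Set.Ioo 1 (1 + Real.sqrt 2) ×ˢ Set.Ioi (1 + 2 * Real.sqrt 2)) ∪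
  (Set.Ioo (-(1 + Real.sqrt 2)) 1 ×ˢ Set.Ioi (1 + Real.sqrt 2)) ∪
  (Set.Iio (-(1 + Real.sqrt 2)) ×ˢ Set.Ioo (1 + Real.sqrt 2) (3 + 3 * Real.sqrt 2))

/-- The measure `μ̂_G` with density `1/(u-v)²` on `D` and `0` elsewhere. -/
def gaussMeasureHat : Measure (ℝ × ℝ) :=
  volume.withDensity (Dgauss.indicator fun p => ENNReal.ofReal ((p.1 - p.2) ^ 2)⁻¹)

/-!
The map `Ĝ` is piecewise a diagonal Möbius map: up to null sets, `D` is the disjoint union of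
countably many rectangles `Pₖ` (one for each of the sectors `Σ₂, …, Σ₆`, and one for each return
time in `Σ₁` and in `Σ₇`) with `Ĝ (u, v) = (Mₖ[u], Mₖ[v])` on `Pₖ`. Every diagonal Möbius map
preserves `du dv / (u - v)²`, because `M[u] - M[v] = det M (u - v) / ((cu + d) (cv + d))` while
`M[·]' = det M / (c · + d)²`. It remains to see that the images `Mₖ Pₖ` tile `D` again. This is a
time-reversal symmetry: for `R (u, v) = (γ v, γ u)` and an involution `k ↦ k*` of the branches,
`γ M_{k*} γ` is the adjugate of `Mₖ`, whence `Mₖ Pₖ = R⁻¹ P_{k*}`; and `R` preserves `D` up to a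
null set.
-/

namespace OctagonGauss

open Function

section Mobius

variable (M N : Matrix (Fin 2) (Fin 2) ℝ)

lemma mob_of (p q r s u : ℝ) : mob !![p, q; r, s] u = (p * u + q) / (r * u + s) := by
  simp [mob]

lemma mob_smul {c : ℝ} (hc : c ≠ 0) : mob (c • M) = mob M := by
  funext u
  simp only [mob, Matrix.smul_apply, smul_eq_mul, mul_assoc, ← mul_add]
  exact mul_div_mul_left _ _ hc

lemma mob_smul_one {c : ℝ} (hc : c ≠ 0) (u : ℝ) : mob (c • 1) u = u := by
  rw [mob_smul 1 hc]
  simp [mob]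

lemma mob_mul {u : ℝ} (h : N 1 0 * u + N 1 1 ≠ 0) : mob (M * N) u = mob M (mob N u) := by
  simp only [mob, Matrix.mul_apply, Fin.sum_univ_two]
  field_simp
  ring

lemma mob_sub {x y : ℝ} (hx : M 1 0 * x + M 1 1 ≠ 0) (hy : M 1 0 * y + M 1 1 ≠ 0) :
    mob M x - mob M y = M.det * (x - y) / ((M 1 0 * x + M 1 1) * (M 1 0 * y + M 1 1)) := by
  rw [Matrix.det_fin_two, mob, mob, div_sub_div _ _ hx hy]
  ring

lemma eq_of_mob_eq (hdet : M.det ≠ 0) {x y : ℝ} (hx : M 1 0 * x + M 1 1 ≠ 0)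
    (hy : M 1 0 * y + M 1 1 ≠ 0) (h : mob M x = mob M y) : x = y := by
  have := mob_sub M hx hy
  rw [h, sub_self, eq_comm, div_eq_zero_iff, mul_eq_zero] at this
  simpa [hdet, hx, hy, sub_eq_zero] using this

lemma hasDerivAt_mob {x : ℝ} (h : M 1 0 * x + M 1 1 ≠ 0) :
    HasDerivAt (mob M) (M.det / (M 1 0 * x + M 1 1) ^ 2) x := by
  have hnum : HasDerivAt (fun u => M 0 0 * u + M 0 1) (M 0 0) x := by
    simpa using ((hasDerivAt_id x).const_mul (M 0 0)).add_const (M 0 1)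
  have hden : HasDerivAt (fun u => M 1 0 * u + M 1 1) (M 1 0) x := by
    simpa using ((hasDerivAt_id x).const_mul (M 1 0)).add_const (M 1 1)
  refine (hnum.div hden h).congr_deriv ?_
  rw [Matrix.det_fin_two]
  ring

lemma measurable_mob : Measurable (mob M) := by
  unfold mob; fun_prop

end Mobius

/-- The measure `du dv / (u - v)²` on pairs of endpoints of geodesics of the hyperbolic plane. -/
def geodesicMeasure : Measure (ℝ × ℝ) :=
  volume.withDensity fun p => ENNReal.ofReal ((p.1 - p.2) ^ 2)⁻¹

lemma geodesicMeasure_absolutelyContinuous : geodesicMeasure ≪ volume :=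
  withDensity_absolutelyContinuous _ _

lemma det_prodMap_toSpanSingleton (d e : ℝ) :
    ((ContinuousLinearMap.toSpanSingleton ℝ d).prodMap
      (ContinuousLinearMap.toSpanSingleton ℝ e)).det = d * e := by
  rw [ContinuousLinearMap.det, ContinuousLinearMap.coe_prodMap, LinearMap.det_prodMap]
  simp

lemma geodesicMeasure_image_prodMap_mob (M : Matrix (Fin 2) (Fin 2) ℝ) (hdet : M.det ≠ 0)
    {S : Set (ℝ × ℝ)} (hS : MeasurableSet S)
    (hden : ∀ p ∈ S, M 1 0 * p.1 + M 1 1 ≠ 0 ∧ M 1 0 * p.2 + M 1 1 ≠ 0) :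
    geodesicMeasure (Prod.map (mob M) (mob M) '' S) = geodesicMeasure S := by
  have hinj : InjOn (Prod.map (mob M) (mob M)) S := fun p hp q hq hpq =>
    Prod.ext (eq_of_mob_eq M hdet (hden p hp).1 (hden q hq).1 (congrArg Prod.fst hpq))
      (eq_of_mob_eq M hdet (hden p hp).2 (hden q hq).2 (congrArg Prod.snd hpq))
  have hderiv : ∀ p ∈ S, HasFDerivWithinAt (Prod.map (mob M) (mob M))
      ((ContinuousLinearMap.toSpanSingleton ℝ (M.det / (M 1 0 * p.1 + M 1 1) ^ 2)).prodMap
        (ContinuousLinearMap.toSpanSingleton ℝ (M.det / (M 1 0 * p.2 + M 1 1) ^ 2))) S p :=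
    fun p hp => ((hasDerivAt_mob M (hden p hp).1).hasFDerivAt.prodMap p
      (hasDerivAt_mob M (hden p hp).2).hasFDerivAt).hasFDerivWithinAt
  have hSim : MeasurableSet (Prod.map (mob M) (mob M) '' S) :=
    hS.image_of_continuousOn_injOn (fun p hp => (hderiv p hp).continuousWithinAt) hinj
  rw [geodesicMeasure, withDensity_apply _ hSim, withDensity_apply _ hS,
    lintegral_image_eq_lintegral_abs_det_fderiv_mul volume hS hderiv hinj]
  refine setLIntegral_congr_fun hS fun p hp => ?_
  obtain ⟨hx, hy⟩ := hden p hp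
  rw [det_prodMap_toSpanSingleton, ← ENNReal.ofReal_mul (abs_nonneg _), Prod.map_fst,
    Prod.map_snd, mob_sub M hx hy]
  congr 1
  by_cases hxy : p.1 - p.2 = 0
  · simp [hxy]
  · rw [abs_of_nonneg (by rw [div_mul_div_comm, ← sq]; positivity)]
    field_simp

theorem measure_preimage_inter_eq_of_piecewise {α ι : Type*} [MeasurableSpace α] [Countable ι]
    {μ : Measure α} {f : α → α} {g : ι → α → α} {D : Set α} {P Q : ι → Set α}
    (hPm : ∀ k, MeasurableSet (P k)) (hQm : ∀ k, MeasurableSet (Q k))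
    (hPd : Pairwise (Disjoint on P)) (hQd : Pairwise (Disjoint on Q))
    (hPD : ⋃ k, P k =ᵐ[μ] D) (hQD : ⋃ k, Q k =ᵐ[μ] D)
    (hfg : ∀ k, EqOn f (g k) (P k)) (hgm : ∀ k, Measurable (g k))
    (himage : ∀ k, g k '' P k = Q k)
    (hμ : ∀ k S, S ⊆ P k → MeasurableSet S → μ (g k '' S) = μ S)
    {A : Set α} (hA : MeasurableSet A) : μ (f ⁻¹' A ∩ D) = μ (A ∩ D) := by
  have hpiece : ∀ k, μ (P k ∩ g k ⁻¹' A) = μ (A ∩ Q k) := fun k => by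
    rw [← hμ k _ inter_subset_left ((hPm k).inter (hgm k hA)), image_inter_preimage, himage,
      inter_comm]
  calc μ (f ⁻¹' A ∩ D) = μ (⋃ k, P k ∩ g k ⁻¹' A) := by
        rw [inter_comm, ← measure_congr (hPD.inter (ae_eq_refl (f ⁻¹' A))), iUnion_inter]
        simp_rw [(hfg _).inter_preimage_eq]
    _ = ∑' k, μ (A ∩ Q k) := by
        rw [measure_iUnion (fun k l hkl => (hPd hkl).mono inter_subset_left inter_subset_left)
          fun k => (hPm k).inter (hgm k hA)]
        simp_rw [hpiece]
    _ = μ (A ∩ D) := by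
        rw [← measure_iUnion (fun k l hkl => (hQd hkl).mono inter_subset_right inter_subset_right)
          fun k => hA.inter (hQm k), ← inter_iUnion]
        exact measure_congr ((ae_eq_refl A).inter hQD)

lemma ae_eq_of_subset_union {α : Type*} [MeasurableSpace α] {μ : Measure α} {s t N : Set α}
    (hst : s ⊆ t ∪ N) (hts : t ⊆ s ∪ N) (hN : μ N = 0) : s =ᵐ[μ] t :=
  ae_eq_set.2 ⟨measure_mono_null (sdiff_subset_iff.2 hst) hN,
    measure_mono_null (sdiff_subset_iff.2 hts) hN⟩

lemma volume_fst_mem_countable {C : Set ℝ} (hC : C.Countable) :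
    volume {p : ℝ × ℝ | p.1 ∈ C} = 0 := by
  rw [show {p : ℝ × ℝ | p.1 ∈ C} = C ×ˢ univ by ext; simp, Measure.volume_eq_prod,
    Measure.prod_prod, hC.measure_zero, zero_mul]

lemma exists_nat_btwn {t : ℝ} (ht : 0 ≤ t) (h : ∀ n : ℕ, t ≠ n) :
    ∃ n : ℕ, (n : ℝ) < t ∧ t < n + 1 :=
  ⟨⌊t⌋₊, (Nat.floor_le ht).lt_of_ne (h _).symm, Nat.lt_floor_add_one t⟩

lemma sqrt_two_sq : √2 ^ 2 = 2 := Real.sq_sqrt zero_le_two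

lemma mob_gam (x : ℝ) : mob gam x = 2 + 2 * √2 - x := by
  simp [gam, mob_of]; ring

lemma gam_den_ne_zero (x : ℝ) : gam 1 0 * x + gam 1 1 ≠ 0 := by
  simp [gam]

lemma mem_preimage_gam_Ioi {x l : ℝ} : x ∈ mob gam ⁻¹' Ioi l ↔ x < 2 + 2 * √2 - l := by
  rw [mem_preimage, mob_gam, mem_Ioi]
  constructor <;> intro <;> linarith

lemma mem_preimage_gam_Ioo {x l r : ℝ} :
    x ∈ mob gam ⁻¹' Ioo l r ↔ 2 + 2 * √2 - r < x ∧ x < 2 + 2 * √2 - l := by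
  rw [mem_preimage, mob_gam, mem_Ioo]
  constructor <;> rintro ⟨h1, h2⟩ <;> constructor <;> linarith

lemma gam_mul_mul_gam {M : Matrix (Fin 2) (Fin 2) ℝ} (h : M 0 0 - M 1 1 = (2 + 2 * √2) * M 1 0) :
    gam * M * gam = M.adjugate := by
  rw [Matrix.eta_fin_two M, gam, Matrix.mul_fin_two, Matrix.mul_fin_two, Matrix.adjugate_fin_two_of]
  ext i j
  fin_cases i <;> fin_cases j <;> simp
  · linear_combination h
  · linear_combination (-(2 + 2 * √2)) * h
  · linear_combination -h

lemma image_mob_eq_preimage_gam {M M' : Matrix (Fin 2) (Fin 2) ℝ} (hdet : M.det ≠ 0)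
    (hdual : gam * M' * gam = M.adjugate) {I J : Set ℝ} (hM : MapsTo (mob M) I (mob gam ⁻¹' J))
    (hM' : MapsTo (mob M') J (mob gam ⁻¹' I)) (hJ : ∀ y ∈ J, M' 1 0 * y + M' 1 1 ≠ 0) :
    mob M '' I = mob gam ⁻¹' J := by
  refine Subset.antisymm (image_subset_iff.2 hM) fun y (hy : mob gam y ∈ J) =>
    ⟨mob gam (mob M' (mob gam y)), hM' hy, ?_⟩
  calc mob M (mob gam (mob M' (mob gam y)))
      = mob (M * gam * M' * gam) y := by
        rw [mob_mul _ _ (gam_den_ne_zero y), mob_mul _ _ (hJ _ hy), mob_mul _ _ (gam_den_ne_zero _)]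
    _ = y := by
        rw [Matrix.mul_assoc, Matrix.mul_assoc, ← Matrix.mul_assoc gam, hdual, Matrix.mul_adjugate,
          mob_smul_one hdet]

/-- Rescalings of the matrices `γ·νᵢ`, with entries in `ℤ[√2]`. -/
def fareyMatrix : ℕ → Matrix (Fin 2) (Fin 2) ℝ
  | 1 => !![1 + 2 * √2, -3 - 2 * √2; 1, -1]
  | 2 => !![-3 - 2 * √2, 1 + 2 * √2; -1, 1]
  | 3 => !![2 + 2 * √2, -1; 1, 0]
  | 4 => !![-2 - 2 * √2, -1; -1, 0]
  | 5 => !![3 + 2 * √2, 1 + 2 * √2; 1, 1]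
  | 6 => !![-1 - 2 * √2, -3 - 2 * √2; -1, -1]
  | 7 => !![1, 2 + 2 * √2; 0, 1]
  | _ => 1

lemma mob_gam_mul_nu {i : ℕ} (h1 : 1 ≤ i) (h7 : i ≤ 7) :
    mob (gam * nu i) = mob (fareyMatrix i) := by
  suffices ∃ c : ℝ, c ≠ 0 ∧ gam * nu i = c • fareyMatrix i by
    obtain ⟨c, hc, h⟩ := this
    rw [h, mob_smul _ hc]
  have hs : (√2)⁻¹ ≠ 0 := by positivity
  interval_cases i
  all_goals first
    | refine ⟨1, one_ne_zero, ?_⟩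
      ext j l; fin_cases j <;> fin_cases l <;> simp [gam, nu, fareyMatrix] <;> linear_combination
    | refine ⟨(√2)⁻¹, hs, ?_⟩
      ext j l; fin_cases j <;> fin_cases l <;> simp [gam, nu, fareyMatrix] <;> linear_combination

lemma sectorIndex_le (u : ℝ) : sectorIndex u ≤ 7 := by
  unfold sectorIndex; split_ifs <;> norm_num

lemma Fhat_eq_of_sectorIndex {p : ℝ × ℝ} {i : ℕ} (h : sectorIndex p.1 = i) (hi : i ≠ 0) :
    Fhat p = Prod.map (mob (fareyMatrix i)) (mob (fareyMatrix i)) p := by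
  rw [Fhat, if_neg (h ▸ hi), h,
    mob_gam_mul_nu (Nat.one_le_iff_ne_zero.2 hi) (h ▸ sectorIndex_le p.1)]
  rfl

lemma Fhat_fst (p : ℝ × ℝ) : (Fhat p).1 = F p.1 := by
  unfold Fhat F
  split_ifs <;> rfl

lemma Fhat_iterate_fst (n : ℕ) (p : ℝ × ℝ) : (Fhat^[n] p).1 = F^[n] p.1 := by
  induction n generalizing p with
  | zero => rfl
  | succ n ih => rw [Function.iterate_succ_apply, Function.iterate_succ_apply, ← Fhat_fst, ih]

lemma sectorIndex_eq_one {u : ℝ} (h1 : 1 < u) (h2 : u ≤ 1 + √2) : sectorIndex u = 1 := by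
  unfold sectorIndex
  rw [if_neg (by linarith), if_pos h1]

lemma sectorIndex_eq_seven {u : ℝ} (h : u ≤ -(1 + √2)) : sectorIndex u = 7 := by
  have := Real.sqrt_nonneg 2
  unfold sectorIndex
  split_ifs <;> first | rfl | (exfalso; linarith)

lemma nG_eq_one {u : ℝ} (h1 : -(1 + √2) < u) (h2 : u ≤ 1) : nG u = 1 := by
  have := Real.sqrt_nonneg 2
  rw [nG, if_neg fun h => by linarith [h.1], if_neg fun h => by linarith [mem_Iic.1 h],
    if_pos (by linarith)]

/-- In the coordinate `t = √2 / (1 + √2 - u)` the branch `γ·ν₁` acts on `Σ₁` as `t ↦ t - 1`;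
`sigma1Cut n` is the point `t = n`. -/
def sigma1Cut (n : ℕ) : ℝ := 1 + √2 - √2 / n

/-- A rescaling of `(γ·ν₁)ⁿ`. -/
def sigma1Matrix (n : ℕ) : Matrix (Fin 2) (Fin 2) ℝ :=
  !![√2 + n * (1 + √2), -(n * (3 + 2 * √2)); n, √2 - n * (1 + √2)]

section Sigma1

variable {n : ℕ}

lemma sigma1Cut_lt_iff (hn : 1 ≤ n) (x : ℝ) : sigma1Cut n < x ↔ (1 + √2 - x) * n < √2 := by
  have hn' : (0 : ℝ) < n := by exact_mod_cast hn
  rw [sigma1Cut, ← lt_div_iff₀ hn']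
  constructor <;> intro <;> linarith

lemma le_sigma1Cut_iff (hn : 1 ≤ n) (x : ℝ) : x ≤ sigma1Cut n ↔ √2 ≤ (1 + √2 - x) * n := by
  have hn' : (0 : ℝ) < n := by exact_mod_cast hn
  rw [sigma1Cut, ← div_le_iff₀ hn']
  constructor <;> intro <;> linarith

lemma lt_sigma1Cut_iff (hn : 1 ≤ n) (x : ℝ) : x < sigma1Cut n ↔ √2 < (1 + √2 - x) * n := by
  have hn' : (0 : ℝ) < n := by exact_mod_cast hn
  rw [sigma1Cut, ← div_lt_iff₀ hn']
  constructor <;> intro <;> linarith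

lemma sigma1Cut_one : sigma1Cut 1 = 1 := by simp [sigma1Cut]

lemma sigma1Cut_mono {j : ℕ} (hj : 1 ≤ j) (hjn : j ≤ n) : sigma1Cut j ≤ sigma1Cut n := by
  have hj' : (0 : ℝ) < j := by exact_mod_cast hj
  have : √2 / n ≤ √2 / j :=
    div_le_div_of_nonneg_left (Real.sqrt_nonneg 2) hj' (by exact_mod_cast hjn)
  unfold sigma1Cut; linarith

lemma one_le_sigma1Cut (hn : 1 ≤ n) : 1 ≤ sigma1Cut n :=
  sigma1Cut_one ▸ sigma1Cut_mono le_rfl hn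

lemma sigma1Cut_lt (hn : 1 ≤ n) : sigma1Cut n < 1 + √2 := by
  have : 0 < √2 / n := div_pos (by positivity) (by exact_mod_cast hn)
  unfold sigma1Cut; linarith

lemma mob_sigma1Matrix (u : ℝ) : mob (sigma1Matrix n) u =
    ((√2 + n * (1 + √2)) * u - n * (3 + 2 * √2)) / (n * u + (√2 - n * (1 + √2))) := by
  rw [sigma1Matrix, mob_of]
  ring

lemma sigma1Matrix_den_pos (hn : 1 ≤ n) {u : ℝ} (hu : sigma1Cut n < u) :
    0 < n * u + (√2 - n * (1 + √2)) := by
  rw [sigma1Cut_lt_iff hn] at hu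
  linarith

lemma mob_sigma1Matrix_lt (hn : 1 ≤ n) {u : ℝ} (h1 : sigma1Cut n < u) (h2 : u < 1 + √2) :
    mob (sigma1Matrix n) u < 1 + √2 := by
  rw [mob_sigma1Matrix, div_lt_iff₀ (sigma1Matrix_den_pos hn h1)]
  nlinarith [sqrt_two_sq, mul_pos (Real.sqrt_pos.2 two_pos) (sub_pos.2 h2)]

lemma one_lt_mob_sigma1Matrix (hn : 1 ≤ n) {u : ℝ} (h1 : sigma1Cut (n + 1) < u) :
    1 < mob (sigma1Matrix n) u := by
  have hden := sigma1Matrix_den_pos hn ((sigma1Cut_mono hn n.le_succ).trans_lt h1)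
  rw [sigma1Cut_lt_iff (by omega)] at h1
  push_cast at h1
  rw [mob_sigma1Matrix, lt_div_iff₀ hden]
  nlinarith [sqrt_two_sq, mul_lt_mul_of_pos_left h1 (Real.sqrt_pos.2 two_pos)]

lemma mob_sigma1Matrix_le_one (hn : 1 ≤ n) {u : ℝ} (h1 : sigma1Cut n < u)
    (h2 : u ≤ sigma1Cut (n + 1)) : mob (sigma1Matrix n) u ≤ 1 := by
  rw [le_sigma1Cut_iff (by omega)] at h2
  push_cast at h2
  rw [mob_sigma1Matrix, div_le_iff₀ (sigma1Matrix_den_pos hn h1)]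
  nlinarith [sqrt_two_sq, mul_le_mul_of_nonneg_left h2 (Real.sqrt_nonneg 2)]

lemma mob_sigma1Matrix_lt_one (hn : 1 ≤ n) {u : ℝ} (h1 : sigma1Cut n < u)
    (h2 : u < sigma1Cut (n + 1)) : mob (sigma1Matrix n) u < 1 := by
  rw [lt_sigma1Cut_iff (by omega)] at h2
  push_cast at h2
  rw [mob_sigma1Matrix, div_lt_iff₀ (sigma1Matrix_den_pos hn h1)]
  nlinarith [sqrt_two_sq, mul_lt_mul_of_pos_left h2 (Real.sqrt_pos.2 two_pos)]

lemma sigma1Matrix_det : (sigma1Matrix n).det = 2 := by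
  rw [sigma1Matrix, Matrix.det_fin_two_of]
  linear_combination (1 - (n : ℝ) ^ 2) * sqrt_two_sq

lemma sigma1Matrix_one : sigma1Matrix 1 = fareyMatrix 1 := by
  ext i j
  fin_cases i <;> fin_cases j <;> simp [sigma1Matrix, fareyMatrix] <;> ring

lemma sigma1Matrix_mul_fareyMatrix_one :
    sigma1Matrix n * fareyMatrix 1 = √2 • sigma1Matrix (n + 1) := by
  ext i j
  fin_cases i <;> fin_cases j <;>
    simp [sigma1Matrix, fareyMatrix, Matrix.mul_apply, Fin.sum_univ_two] <;>
    first
      | linear_combination (n : ℝ) * sqrt_two_sq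
      | linear_combination

lemma sub_mob_sigma1Matrix {v : ℝ} (hv : n * v + (√2 - n * (1 + √2)) ≠ 0) :
    mob (sigma1Matrix n) v - (1 + √2) = √2 * (v - (1 + √2)) / (n * v + (√2 - n * (1 + √2))) := by
  rw [mob_sigma1Matrix, div_sub' hv, div_left_inj' hv]
  linear_combination (n : ℝ) * sqrt_two_sq

lemma mob_sigma1Matrix_mem (hn : 1 ≤ n) {v : ℝ} (hv : 1 + 2 * √2 < v) :
    mob (sigma1Matrix n) v ∈ mob gam ⁻¹' Ioo (sigma1Cut n) (sigma1Cut (n + 1)) := by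
  have hn' : (1 : ℝ) ≤ n := by exact_mod_cast hn
  have hden : 0 < n * v + (√2 - n * (1 + √2)) := by nlinarith [Real.sqrt_nonneg 2]
  have key := sub_mob_sigma1Matrix hden.ne'
  have hs := Real.sqrt_pos.2 two_pos
  rw [mem_preimage_gam_Ioo, sigma1Cut, sigma1Cut]
  constructor
  · suffices √2 / ↑(n + 1) < mob (sigma1Matrix n) v - (1 + √2) by linarith
    rw [key, div_lt_div_iff₀ (by positivity) hden]
    push_cast
    nlinarith [mul_lt_mul_of_pos_left (show √2 < v - (1 + √2) by linarith) hs]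
  · suffices mob (sigma1Matrix n) v - (1 + √2) < √2 / n by linarith
    rw [key, div_lt_div_iff₀ hden (by positivity)]
    nlinarith [sqrt_two_sq]

end Sigma1

lemma mob_fareyMatrix_one (u : ℝ) :
    mob (fareyMatrix 1) u = ((1 + 2 * √2) * u - 3 - 2 * √2) / (u - 1) := by
  rw [fareyMatrix, mob_of]
  ring

lemma fareyMatrix_one_den_ne_zero {u : ℝ} (hu : 1 < u) :
    fareyMatrix 1 1 0 * u + fareyMatrix 1 1 1 ≠ 0 := by
  simp [fareyMatrix]
  linarith

lemma lt_mob_fareyMatrix_one {v : ℝ} (hv : 1 + √2 < v) : 1 + √2 < mob (fareyMatrix 1) v := by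
  have := Real.sqrt_nonneg 2
  rw [mob_fareyMatrix_one, lt_div_iff₀ (by linarith)]
  nlinarith [sqrt_two_sq]

lemma sigma1Cut_lt_mob_fareyMatrix_one {n : ℕ} (hn : 1 ≤ n) {u : ℝ}
    (h1 : sigma1Cut (n + 1) < u) : sigma1Cut n < mob (fareyMatrix 1) u := by
  have hu : 1 < u := (one_le_sigma1Cut (by omega)).trans_lt h1
  rw [sigma1Cut_lt_iff (by omega)] at h1
  push_cast at h1
  have key : 1 + √2 - mob (fareyMatrix 1) u = √2 * (1 + √2 - u) / (u - 1) := by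
    have : u - 1 ≠ 0 := by linarith
    rw [mob_fareyMatrix_one]
    field_simp
    linear_combination -sqrt_two_sq
  rw [sigma1Cut_lt_iff hn, key, div_mul_eq_mul_div, div_lt_iff₀ (by linarith)]
  nlinarith [mul_lt_mul_of_pos_left h1 (Real.sqrt_pos.2 two_pos)]

lemma Fhat_iterate_of_sigma1 {n : ℕ} (hn : 1 ≤ n) {p : ℝ × ℝ} (h1 : sigma1Cut n < p.1)
    (h2 : p.1 < 1 + √2) (hv : 1 + √2 < p.2) :
    Fhat^[n] p = Prod.map (mob (sigma1Matrix n)) (mob (sigma1Matrix n)) p := by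
  induction n, hn using Nat.le_induction generalizing p with
  | base =>
    rw [sigma1Cut_one] at h1
    rw [Function.iterate_one, Fhat_eq_of_sectorIndex (sectorIndex_eq_one h1 h2.le) one_ne_zero,
      sigma1Matrix_one]
  | succ n hn ih =>
    have hu : 1 < p.1 := (one_le_sigma1Cut (by omega)).trans_lt h1
    have hlt : mob (fareyMatrix 1) p.1 < 1 + √2 := by
      rw [← sigma1Matrix_one]
      exact mob_sigma1Matrix_lt le_rfl (sigma1Cut_one ▸ hu) h2
    have hcomp : ∀ x, 1 < x →
        mob (sigma1Matrix n) (mob (fareyMatrix 1) x) = mob (sigma1Matrix (n + 1)) x :=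
      fun x hx => by
        rw [← mob_mul _ _ (fareyMatrix_one_den_ne_zero hx), sigma1Matrix_mul_fareyMatrix_one,
          mob_smul _ (by positivity)]
    rw [Function.iterate_succ_apply,
      Fhat_eq_of_sectorIndex (sectorIndex_eq_one hu h2.le) one_ne_zero,
      ih (sigma1Cut_lt_mob_fareyMatrix_one hn h1) hlt (lt_mob_fareyMatrix_one hv)]
    exact Prod.ext (hcomp _ hu) (hcomp _ (by linarith [Real.sqrt_nonneg 2]))

lemma n1_eq {n : ℕ} (hn : 1 ≤ n) {u : ℝ} (h1 : sigma1Cut n < u) (h2 : u ≤ sigma1Cut (n + 1)) :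
    n1 u = n := by
  have hua : u < 1 + √2 := h2.trans_lt (sigma1Cut_lt (by omega))
  have hiter : ∀ j, 1 ≤ j → j ≤ n → F^[j] u = mob (sigma1Matrix j) u := fun j hj hjn => by
    rw [← Fhat_iterate_fst j (u, 2 + 2 * √2), Fhat_iterate_of_sigma1 hj
      ((sigma1Cut_mono hj hjn).trans_lt h1) hua (by simp; linarith [Real.sqrt_nonneg 2])]
    rfl
  refine IsLeast.csInf_eq ⟨⟨hn, ?_⟩, fun j ⟨hj, hout⟩ => ?_⟩
  · rw [hiter n hn le_rfl]
    exact fun h => (mob_sigma1Matrix_le_one hn h1 h2).not_gt h.1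
  · by_contra! hjn
    apply hout
    rw [hiter j hj hjn.le]
    exact ⟨one_lt_mob_sigma1Matrix hj ((sigma1Cut_mono (by omega) hjn).trans_lt h1),
      (mob_sigma1Matrix_lt hj ((sigma1Cut_mono hj hjn.le).trans_lt h1) hua).le⟩

lemma nG_of_sigma1 {n : ℕ} (hn : 1 ≤ n) {u : ℝ} (h1 : sigma1Cut n < u)
    (h2 : u ≤ sigma1Cut (n + 1)) : nG u = n := by
  have hmem : u ∈ Ioc 1 (1 + √2) :=
    ⟨(one_le_sigma1Cut hn).trans_lt h1, (h2.trans_lt (sigma1Cut_lt (by omega))).le⟩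
  rw [nG, if_pos hmem, n1_eq hn h1 h2]

/-- The matrix `(γ·ν₇)ⁿ`. -/
def sigma7Matrix (n : ℕ) : Matrix (Fin 2) (Fin 2) ℝ := !![1, 2 * n * (1 + √2); 0, 1]

lemma mob_sigma7Matrix (n : ℕ) (u : ℝ) : mob (sigma7Matrix n) u = u + 2 * n * (1 + √2) := by
  simp [sigma7Matrix, mob_of]

lemma sigma7Matrix_one : sigma7Matrix 1 = fareyMatrix 7 := by
  ext i j
  fin_cases i <;> fin_cases j <;> simp [sigma7Matrix, fareyMatrix]
  ring

lemma Fhat_iterate_of_sigma7 (k : ℕ) {p : ℝ × ℝ} (h : p.1 + 2 * k * (1 + √2) ≤ -(1 + √2)) :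
    Fhat^[k + 1] p = Prod.map (mob (sigma7Matrix (k + 1))) (mob (sigma7Matrix (k + 1))) p := by
  induction k generalizing p with
  | zero =>
    rw [Function.iterate_one, Fhat_eq_of_sectorIndex (sectorIndex_eq_seven (by simpa using h))
      (by norm_num), ← sigma7Matrix_one]
  | succ k ih =>
    push_cast at h
    have hs : sectorIndex p.1 = 7 :=
      sectorIndex_eq_seven (by nlinarith [Real.sqrt_nonneg 2, k.cast_nonneg (α := ℝ)])
    rw [Function.iterate_succ_apply, Fhat_eq_of_sectorIndex hs (by norm_num),
      ← sigma7Matrix_one, ih (by simp only [Prod.map_fst, mob_sigma7Matrix]; push_cast; linarith)]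
    ext <;> simp only [Prod.map_fst, Prod.map_snd, mob_sigma7Matrix] <;> push_cast <;> ring

lemma n7_eq (k : ℕ) {u : ℝ} (h1 : -(2 * k + 3) * (1 + √2) < u)
    (h2 : u ≤ -(2 * k + 1) * (1 + √2)) : n7 u = k + 1 := by
  have hiter : ∀ j ≤ k, F^[j + 1] u = u + 2 * (j + 1) * (1 + √2) := fun j hj => by
    have hj' : (j : ℝ) ≤ k := by exact_mod_cast hj
    rw [← Fhat_iterate_fst (j + 1) (u, 0), Fhat_iterate_of_sigma7 j (by
      simp only; nlinarith [Real.sqrt_nonneg 2])]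
    simp [mob_sigma7Matrix]
  refine IsLeast.csInf_eq ⟨⟨k.succ_pos, ?_⟩, fun m ⟨hm, hout⟩ => ?_⟩
  · rw [hiter k le_rfl, mem_Iic, not_le]
    linarith
  · by_contra! hmk
    obtain ⟨j, rfl⟩ := Nat.exists_eq_add_of_lt hm
    have hj' : (j : ℝ) + 1 ≤ k := by exact_mod_cast (by omega : j + 1 ≤ k)
    apply hout
    rw [zero_add, hiter j (by omega), mem_Iic]
    nlinarith [Real.sqrt_nonneg 2]

lemma nG_of_sigma7 (k : ℕ) {u : ℝ} (h1 : -(2 * k + 3) * (1 + √2) < u)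
    (h2 : u ≤ -(2 * k + 1) * (1 + √2)) : nG u = k + 1 := by
  have hu : u ≤ -(1 + √2) := h2.trans (by nlinarith [Real.sqrt_nonneg 2, k.cast_nonneg (α := ℝ)])
  rw [nG, if_neg fun h => by linarith [h.1, Real.sqrt_nonneg 2], if_pos (mem_Iic.2 hu),
    n7_eq k h1 h2]

/-- The involution `(u, v) ↦ (γ v, γ u)`, which conjugates `Ĝ` to its inverse. -/
def timeReversal (p : ℝ × ℝ) : ℝ × ℝ := (mob gam p.2, mob gam p.1)

lemma preimage_timeReversal_prod (I J : Set ℝ) :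
    timeReversal ⁻¹' (I ×ˢ J) = (mob gam ⁻¹' J) ×ˢ (mob gam ⁻¹' I) := by
  ext p
  simp [timeReversal, and_comm]

lemma quasiMeasurePreserving_timeReversal :
    Measure.QuasiMeasurePreserving timeReversal volume volume := by
  have hγ : MeasurePreserving (mob gam) volume volume := by
    rw [show mob gam = fun x => (2 + 2 * √2) - x from funext mob_gam]
    exact Measure.measurePreserving_sub_left volume _
  exact (QuasiMeasurePreserving.prodMap hγ.quasiMeasurePreserving hγ.quasiMeasurePreserving).comp
    Measure.measurePreserving_swap.quasiMeasurePreserving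

/-- `D` together with the two segments `u = 1` and `u = -(1 + √2)` that separate its three
rectangles. -/
def octagonRegion : Set (ℝ × ℝ) :=
  {p | p.1 < 1 + √2 ∧ 1 + √2 < p.2 ∧ (p.1 < 1 ∨ 1 + 2 * √2 < p.2) ∧
    (-(1 + √2) < p.1 ∨ p.2 < 3 + 3 * √2)}

lemma preimage_timeReversal_octagonRegion : timeReversal ⁻¹' octagonRegion = octagonRegion := by
  ext p
  simp only [octagonRegion, timeReversal, mob_gam, mem_preimage, mem_ofPred_eq]
  constructor <;> rintro ⟨h1, h2, h3 | h3, h4 | h4⟩ <;>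
    refine ⟨by linarith, by linarith, ?_, ?_⟩ <;> first | (left; linarith) | (right; linarith)

lemma measurableSet_Dgauss : MeasurableSet Dgauss :=
  ((measurableSet_Ioo.prod measurableSet_Ioi).union
    (measurableSet_Ioo.prod measurableSet_Ioi)).union (measurableSet_Iio.prod measurableSet_Ioo)

lemma Dgauss_ae_eq_octagonRegion : Dgauss =ᵐ[volume] octagonRegion := by
  have := Real.sqrt_nonneg 2
  refine ae_eq_of_subset_union (N := {p | p.1 ∈ ({1, -(1 + √2)} : Set ℝ)}) ?_ ?_
    (volume_fst_mem_countable (toFinite _).countable)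
  · rintro p ((⟨⟨h1, h2⟩, h3⟩ | ⟨⟨h1, h2⟩, h3⟩) | ⟨h1, h2, h3⟩) <;> left
    · exact ⟨h2, by linarith [mem_Ioi.1 h3], Or.inr h3, Or.inl (by linarith)⟩
    · exact ⟨by linarith, h3, Or.inl h2, Or.inl h1⟩
    · exact ⟨by linarith [mem_Iio.1 h1], h2, Or.inl (by linarith [mem_Iio.1 h1]), Or.inr h3⟩
  · rintro ⟨u, v⟩ ⟨h1, h2, h3, h4⟩
    simp only [Dgauss, mem_union, mem_prod, mem_Ioo, mem_Ioi, mem_Iio, mem_ofPred_eq,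
      mem_insert_iff, mem_singleton_iff] at *
    rcases lt_trichotomy u 1 with hu | rfl | hu
    · rcases lt_trichotomy u (-(1 + √2)) with hu' | hu' | hu'
      · exact Or.inl (Or.inr ⟨hu', h2, h4.resolve_left (by linarith)⟩)
      · exact Or.inr (Or.inr hu')
      · exact Or.inl (Or.inl (Or.inr ⟨⟨hu', hu⟩, h2⟩))
    · exact Or.inr (Or.inl rfl)
    · exact Or.inl (Or.inl (Or.inl ⟨⟨hu, h1⟩, h3.resolve_left (by linarith)⟩))

lemma gaussMeasureHat_eq_restrict : gaussMeasureHat = geodesicMeasure.restrict Dgauss := by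
  rw [gaussMeasureHat, geodesicMeasure, restrict_withDensity measurableSet_Dgauss,
    ← withDensity_indicator measurableSet_Dgauss]

/-- The branches of `Ĝ` on `D`. The return time of `sigma1 n` and `sigma7 n` is `n + 1`. -/
inductive Branch : Type
  | sigma1 (n : ℕ)
  | sigma2
  | sigma3
  | sigma4
  | sigma5
  | sigma6
  | sigma7 (n : ℕ)

namespace Branch

def sector : Branch → ℕ
  | sigma1 _ => 1
  | sigma2 => 2
  | sigma3 => 3
  | sigma4 => 4
  | sigma5 => 5
  | sigma6 => 6
  | sigma7 _ => 7

def returnTime : Branch → ℕ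
  | sigma1 n => n + 1
  | sigma7 n => n + 1
  | _ => 1

def matrix : Branch → Matrix (Fin 2) (Fin 2) ℝ
  | sigma1 n => sigma1Matrix (n + 1)
  | sigma2 => fareyMatrix 2
  | sigma3 => fareyMatrix 3
  | sigma4 => fareyMatrix 4
  | sigma5 => fareyMatrix 5
  | sigma6 => fareyMatrix 6
  | sigma7 n => sigma7Matrix (n + 1)

def domU : Branch → Set ℝ
  | sigma1 n => Ioo (sigma1Cut (n + 1)) (sigma1Cut (n + 2))
  | sigma2 => Ioo (√2 - 1) 1
  | sigma3 => Ioo 0 (√2 - 1)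
  | sigma4 => Ioo (1 - √2) 0
  | sigma5 => Ioo (-1) (1 - √2)
  | sigma6 => Ioo (-(1 + √2)) (-1)
  | sigma7 n => Ioo (-(2 * n + 3) * (1 + √2)) (-(2 * n + 1) * (1 + √2))

def domV : Branch → Set ℝ
  | sigma1 _ => Ioi (1 + 2 * √2)
  | sigma7 _ => Ioo (1 + √2) (3 + 3 * √2)
  | _ => Ioi (1 + √2)

def piece (k : Branch) : Set (ℝ × ℝ) := k.domU ×ˢ k.domV

def map (k : Branch) : ℝ × ℝ → ℝ × ℝ := Prod.map (mob k.matrix) (mob k.matrix)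

/-- The branch whose matrix, conjugated by `γ`, inverts the matrix of `k` (since `ν₆ = ν₂⁻¹` and
the other `νᵢ` are involutions). -/
def dual : Branch → Branch
  | sigma2 => sigma6
  | sigma6 => sigma2
  | k => k

lemma dual_involutive : Involutive dual := by
  intro k; cases k <;> rfl

lemma injective_sector_returnTime : Injective fun k : Branch => (k.sector, k.returnTime) := by
  intro k l h
  cases k <;> cases l <;> simp_all [sector, returnTime]

instance : Countable Branch := injective_sector_returnTime.countable

lemma measurableSet_piece (k : Branch) : MeasurableSet k.piece := by
  cases k
  all_goals first
    | exact measurableSet_Ioo.prod measurableSet_Ioi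
    | exact measurableSet_Ioo.prod measurableSet_Ioo

lemma det_ne_zero (k : Branch) : k.matrix.det ≠ 0 := by
  have := Real.sqrt_nonneg 2
  cases k
  case sigma1 n => simp [matrix, sigma1Matrix_det]
  all_goals simp [matrix, fareyMatrix, sigma7Matrix, Matrix.det_fin_two]
  all_goals nlinarith [sqrt_two_sq]

lemma gam_mul_dual_mul_gam (k : Branch) : gam * k.dual.matrix * gam = k.matrix.adjugate := by
  cases k <;> simp only [dual]
  case sigma2 | sigma6 =>
    rw [Matrix.adjugate_fin_two]
    ext i j
    fin_cases i <;> fin_cases j <;>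
      simp [matrix, fareyMatrix, gam, Matrix.mul_apply, Fin.sum_univ_two] <;> ring
  all_goals apply gam_mul_mul_gam
  case sigma3 | sigma7 => simp [matrix, fareyMatrix, sigma7Matrix]
  all_goals simp [matrix, fareyMatrix, sigma1Matrix]; ring

lemma den_pos_of_mem_domU (k : Branch) {u : ℝ} (hu : u ∈ k.domU) :
    0 < k.matrix 1 0 * u + k.matrix 1 1 := by
  cases k
  case sigma1 n => simpa [matrix, sigma1Matrix] using sigma1Matrix_den_pos (by omega) hu.1
  case sigma7 n => simp [matrix, sigma7Matrix]
  all_goals simp only [domU, mem_Ioo] at hu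
  all_goals simp [matrix, fareyMatrix]; linarith

lemma den_ne_zero_of_mem_domV (k : Branch) {v : ℝ} (hv : v ∈ k.domV) :
    k.matrix 1 0 * v + k.matrix 1 1 ≠ 0 := by
  have := Real.sqrt_pos.2 two_pos
  cases k
  case sigma1 n =>
    refine (sigma1Matrix_den_pos (n := n + 1) (by omega) ?_).ne'
    exact (sigma1Cut_lt (by omega)).trans (lt_trans (by linarith) (mem_Ioi.1 hv))
  case sigma7 n => simp [matrix, sigma7Matrix]
  all_goals simp only [domV, mem_Ioi] at hv
  all_goals simp [matrix, fareyMatrix]; linarith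

lemma mapsTo_domU (k : Branch) : MapsTo (mob k.matrix) k.domU (mob gam ⁻¹' k.dual.domV) := by
  intro u hu
  have hs := sqrt_two_sq
  cases k
  case sigma1 n =>
    have := mob_sigma1Matrix_lt_one (n := n + 1) (by omega) hu.1 hu.2
    exact mem_preimage_gam_Ioi.2 (by simp only [matrix]; linarith)
  case sigma7 n =>
    simp only [domU, mem_Ioo] at hu
    simp only [matrix, mob_sigma7Matrix, dual, domV, mem_preimage_gam_Ioo]
    push_cast
    constructor <;> linarith
  all_goals simp only [domU, mem_Ioo] at hu
  all_goals simp only [matrix, dual, domV, mem_preimage_gam_Ioi, fareyMatrix, mob_of]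
  all_goals rw [div_lt_iff₀ (by linarith)]
  case sigma2 => nlinarith [mul_pos (sub_pos.2 hu.1) (by positivity : (0 : ℝ) < 2 + √2)]
  case sigma3 => nlinarith [mul_pos (sub_pos.2 hu.2) (by positivity : (0 : ℝ) < 1 + √2)]
  case sigma4 => nlinarith [mul_pos (sub_pos.2 hu.1) (by positivity : (0 : ℝ) < 1 + √2)]
  case sigma5 => nlinarith [mul_pos (sub_pos.2 hu.2) (by positivity : (0 : ℝ) < 2 + √2)]
  case sigma6 => nlinarith [mul_pos (neg_lt_iff_pos_add.1 hu.1) (Real.sqrt_pos.2 two_pos)]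

lemma mapsTo_domV (k : Branch) : MapsTo (mob k.matrix) k.domV (mob gam ⁻¹' k.dual.domU) := by
  intro v hv
  have hs := Real.sqrt_pos.2 two_pos
  have hs2 := sqrt_two_sq
  cases k
  case sigma1 n => exact mob_sigma1Matrix_mem (n := n + 1) (by omega) hv
  case sigma7 n =>
    simp only [domV, mem_Ioo] at hv
    simp only [matrix, mob_sigma7Matrix, dual, domU, mem_preimage_gam_Ioo]
    push_cast
    constructor <;> linarith
  all_goals simp only [domV, mem_Ioi] at hv
  all_goals simp only [matrix, dual, domU, mem_preimage_gam_Ioo, fareyMatrix, mob_of]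
  case sigma2 =>
    rw [lt_div_iff_of_neg (by linarith), div_lt_iff_of_neg (by linarith)]
    constructor <;> nlinarith
  case sigma3 =>
    rw [lt_div_iff₀ (by linarith), div_lt_iff₀ (by linarith)]
    constructor <;> nlinarith
  case sigma4 =>
    rw [lt_div_iff_of_neg (by linarith), div_lt_iff_of_neg (by linarith)]
    constructor <;> nlinarith
  case sigma5 =>
    rw [lt_div_iff₀ (by linarith), div_lt_iff₀ (by linarith)]
    constructor <;> nlinarith
  case sigma6 =>
    rw [lt_div_iff_of_neg (by linarith), div_lt_iff_of_neg (by linarith)]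
    constructor <;> nlinarith

lemma image_piece (k : Branch) : k.map '' k.piece = timeReversal ⁻¹' k.dual.piece := by
  have hdualU := k.dual.mapsTo_domU
  have hdualV := k.dual.mapsTo_domV
  rw [dual_involutive k] at hdualU hdualV
  have hU := image_mob_eq_preimage_gam k.det_ne_zero k.gam_mul_dual_mul_gam k.mapsTo_domU
    hdualV fun _ => k.dual.den_ne_zero_of_mem_domV
  have hV := image_mob_eq_preimage_gam k.det_ne_zero k.gam_mul_dual_mul_gam k.mapsTo_domV
    hdualU fun _ hu => (k.dual.den_pos_of_mem_domU hu).ne'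
  rw [piece, piece, preimage_timeReversal_prod, ← hU, ← hV, prod_image_image_eq]
  rfl

lemma sectorIndex_eq (k : Branch) {u : ℝ} (hu : u ∈ k.domU) : sectorIndex u = k.sector := by
  have := Real.one_lt_sqrt_two
  have := Real.sqrt_two_lt_three_halves
  cases k
  case sigma1 n =>
    exact sectorIndex_eq_one ((one_le_sigma1Cut (by omega)).trans_lt hu.1)
      (hu.2.trans (sigma1Cut_lt (by omega))).le
  case sigma7 n =>
    exact sectorIndex_eq_seven (hu.2.le.trans (by nlinarith [(n.cast_nonneg : (0 : ℝ) ≤ n)]))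
  all_goals obtain ⟨h1, h2⟩ := hu
  all_goals unfold sectorIndex; split_ifs <;> first | rfl | (exfalso; linarith)

lemma nG_eq (k : Branch) {u : ℝ} (hu : u ∈ k.domU) : nG u = k.returnTime := by
  have := Real.one_lt_sqrt_two
  have := Real.sqrt_two_lt_three_halves
  cases k
  case sigma1 n => exact nG_of_sigma1 (n := n + 1) (by omega) hu.1 hu.2.le
  case sigma7 n => exact nG_of_sigma7 n hu.1 hu.2.le
  all_goals obtain ⟨h1, h2⟩ := hu
  all_goals exact nG_eq_one (by linarith) (by linarith)

lemma Fhat_iterate_returnTime (k : Branch) {p : ℝ × ℝ} (hp : p ∈ k.piece) :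
    Fhat^[k.returnTime] p = k.map p := by
  obtain ⟨hu, hv⟩ := hp
  cases k
  case sigma1 n =>
    exact Fhat_iterate_of_sigma1 (n := n + 1) (by omega) hu.1
      (hu.2.trans (sigma1Cut_lt (by omega)))
      ((by linarith [Real.sqrt_pos.2 two_pos] : 1 + √2 < 1 + 2 * √2).trans hv)
  case sigma7 n =>
    exact Fhat_iterate_of_sigma7 n (by linarith [hu.2])
  all_goals exact Fhat_eq_of_sectorIndex (sectorIndex_eq _ hu) (by simp [sector])

lemma Ghat_eqOn (k : Branch) : EqOn Ghat k.map k.piece :=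
  fun p hp => by rw [Ghat, k.nG_eq hp.1, k.Fhat_iterate_returnTime hp]

lemma pairwise_disjoint_piece : Pairwise (Disjoint on piece) := fun k l hkl =>
  disjoint_left.2 fun p hk hl => hkl <| injective_sector_returnTime <| by
    simp only [← k.sectorIndex_eq hk.1, ← k.nG_eq hk.1, ← l.sectorIndex_eq hl.1, ← l.nG_eq hl.1]

lemma pairwise_disjoint_preimage_timeReversal :
    Pairwise (Disjoint on fun k => timeReversal ⁻¹' (dual k).piece) := fun _ _ hkl =>
  (pairwise_disjoint_piece (dual_involutive.injective.ne hkl)).preimage _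

lemma piece_subset_Dgauss (k : Branch) : k.piece ⊆ Dgauss := by
  have := Real.one_lt_sqrt_two
  have := Real.sqrt_two_lt_three_halves
  rintro ⟨u, v⟩ ⟨hu, hv⟩
  cases k
  case sigma1 n =>
    exact Or.inl (Or.inl ⟨⟨(one_le_sigma1Cut (by omega)).trans_lt hu.1,
      hu.2.trans (sigma1Cut_lt (by omega))⟩, hv⟩)
  case sigma7 n =>
    exact Or.inr ⟨hu.2.trans_le (by nlinarith [(n.cast_nonneg : (0 : ℝ) ≤ n)]), hv⟩
  all_goals obtain ⟨h1, h2⟩ := hu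
  all_goals exact Or.inl (Or.inr ⟨⟨by linarith, by linarith⟩, hv⟩)

def domUEndpoints : Set ℝ :=
  range sigma1Cut ∪ range (fun n : ℕ => -(2 * n + 1) * (1 + √2)) ∪ {√2 - 1, 0, 1 - √2, -1}

lemma countable_domUEndpoints : domUEndpoints.Countable :=
  ((countable_range _).union (countable_range _)).union (toFinite _).countable

lemma exists_mem_domU_sigma1 {u : ℝ} (h1 : 1 < u) (h2 : u < 1 + √2) (hu : u ∉ range sigma1Cut) :
    ∃ n, u ∈ (sigma1 n).domU := by
  have hw : 0 < 1 + √2 - u := by linarith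
  set r := √2 / (1 + √2 - u) with hr
  have hrw : r * (1 + √2 - u) = √2 := div_mul_cancel₀ _ hw.ne'
  obtain ⟨n, hn1, hn2⟩ := exists_nat_btwn (t := r - 1) (by
    rw [sub_nonneg, hr, one_le_div hw]; linarith) fun n hn => hu ⟨n + 1, by
      rw [sigma1Cut, Nat.cast_succ, show (n : ℝ) + 1 = r by linarith, hr,
        div_div_cancel₀ (Real.sqrt_pos.2 two_pos).ne']
      ring⟩
  refine ⟨n, (sigma1Cut_lt_iff (by omega) u).2 ?_, (lt_sigma1Cut_iff (by omega) u).2 ?_⟩ <;>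
    push_cast <;> nlinarith

lemma exists_mem_domU_sigma7 {u : ℝ} (h : u < -(1 + √2))
    (hu : u ∉ range fun n : ℕ => -(2 * n + 1) * (1 + √2)) : ∃ n, u ∈ (sigma7 n).domU := by
  have ha : 0 < 2 * (1 + √2) := by positivity
  obtain ⟨n, hn1, hn2⟩ := exists_nat_btwn (t := (-u - (1 + √2)) / (2 * (1 + √2)))
    (div_nonneg (by linarith) ha.le) fun n hn => hu ⟨n, by
      rw [div_eq_iff ha.ne'] at hn
      linarith⟩
  rw [lt_div_iff₀ ha] at hn1
  rw [div_lt_iff₀ ha] at hn2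
  exact ⟨n, by linarith, by linarith⟩

lemma exists_mem_piece {p : ℝ × ℝ} (hp : p ∈ Dgauss) (hb : p.1 ∉ domUEndpoints) :
    ∃ k : Branch, p ∈ k.piece := by
  simp only [domUEndpoints, mem_union, mem_insert_iff, mem_singleton_iff, not_or] at hb
  obtain ⟨⟨hb1, hb7⟩, hb2, hb3, hb4, hb5⟩ := hb
  rcases hp with (⟨⟨h1, h2⟩, hv⟩ | ⟨⟨h1, h2⟩, hv⟩) | ⟨hu, hv⟩
  · obtain ⟨n, hn⟩ := exists_mem_domU_sigma1 h1 h2 hb1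
    exact ⟨sigma1 n, hn, hv⟩
  · rcases lt_or_gt_of_ne hb5 with h5 | h5
    · exact ⟨sigma6, ⟨h1, h5⟩, hv⟩
    rcases lt_or_gt_of_ne hb4 with h4 | h4
    · exact ⟨sigma5, ⟨h5, h4⟩, hv⟩
    rcases lt_or_gt_of_ne hb3 with h3 | h3
    · exact ⟨sigma4, ⟨h4, h3⟩, hv⟩
    rcases lt_or_gt_of_ne hb2 with h2' | h2'
    · exact ⟨sigma3, ⟨h3, h2'⟩, hv⟩
    · exact ⟨sigma2, ⟨h2', h2⟩, hv⟩
  · obtain ⟨n, hn⟩ := exists_mem_domU_sigma7 hu hb7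
    exact ⟨sigma7 n, hn, hv⟩

lemma iUnion_piece_ae_eq : ⋃ k, piece k =ᵐ[volume] Dgauss :=
  ae_eq_of_subset_union (N := {p | p.1 ∈ domUEndpoints})
    ((iUnion_subset piece_subset_Dgauss).trans subset_union_left)
    (fun p hp => (em (p.1 ∈ domUEndpoints)).elim Or.inr fun hb =>
      Or.inl (mem_iUnion.2 (exists_mem_piece hp hb)))
    (volume_fst_mem_countable countable_domUEndpoints)

lemma iUnion_preimage_timeReversal_ae_eq :
    ⋃ k, timeReversal ⁻¹' (dual k).piece =ᵐ[volume] Dgauss := by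
  rw [← preimage_iUnion, dual_involutive.surjective.iUnion_comp piece]
  refine (quasiMeasurePreserving_timeReversal.preimage_ae_eq
    (iUnion_piece_ae_eq.trans Dgauss_ae_eq_octagonRegion)).trans ?_
  rw [preimage_timeReversal_octagonRegion]
  exact Dgauss_ae_eq_octagonRegion.symm

lemma measurable_map (k : Branch) : Measurable k.map :=
  (measurable_mob _).prodMap (measurable_mob _)

lemma geodesicMeasure_image (k : Branch) (S : Set (ℝ × ℝ)) (hS : S ⊆ k.piece)
    (hSm : MeasurableSet S) : geodesicMeasure (k.map '' S) = geodesicMeasure S :=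
  geodesicMeasure_image_prodMap_mob _ k.det_ne_zero hSm fun _ hp =>
    ⟨(k.den_pos_of_mem_domU (hS hp).1).ne', k.den_ne_zero_of_mem_domV (hS hp).2⟩

end Branch

end OctagonGauss

/-- The measure `μ̂_G` with density `1/(u-v)²` on `D` is invariant under the natural
extension `Ĝ` of the octagon Gauss map. -/
theorem gaussMeasureHat_invariant (A : Set (ℝ × ℝ)) (hA : MeasurableSet A) :
    gaussMeasureHat (Ghat ⁻¹' A) = gaussMeasureHat A := by
  open OctagonGauss Branch in
  · rw [gaussMeasureHat_eq_restrict, Measure.restrict_apply' measurableSet_Dgauss,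
      Measure.restrict_apply' measurableSet_Dgauss]
    exact measure_preimage_inter_eq_of_piecewise measurableSet_piece
      (fun k => quasiMeasurePreserving_timeReversal.measurable k.dual.measurableSet_piece)
      pairwise_disjoint_piece pairwise_disjoint_preimage_timeReversal
      (geodesicMeasure_absolutelyContinuous.ae_eq iUnion_piece_ae_eq)
      (geodesicMeasure_absolutelyContinuous.ae_eq iUnion_preimage_timeReversal_ae_eq)
      Ghat_eqOn measurable_map image_piece geodesicMeasure_image hA
end
end

section
/- The natural extension Ĝ of the octagon Gauss map is, up to null sets, a bijection of its domain D onto itself: there exist Lebesgue-null sets N₁, N₂ ⊆ D such that Ĝ restricted to D \ N₁ is a bijection onto D \ N₂. -/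
open MeasureTheory Set

noncomputable section

/-!
`Ĝ` applies one and the same linear fractional map to both coordinates, and this map is
constant on countably many pieces of `D`, each a product of intervals. On the open sectors
`Σ₂, …, Σ₆` it is the single Farey step `γνⱼ`. On `Σ₇` the Farey map is the translation by
`2 + 2√2`, so the points leaving `Σ₇` after exactly `n + 1` steps form an interval on which `Ĝ`
is the translation by `(n + 1)(2 + 2√2)`. On `Σ₁` the Farey map is parabolic with fixed point
`1 + √2`, and in the coordinate `√2 / (u - 1 - √2)` it becomes the translation by `1`, so `Σ₁`
splits in the same way. On each piece `Ĝ` is a product of two interval bijections; the image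
`v`-intervals tile `(1 + √2, ∞)` and the image `u`-intervals cover the corresponding sections
of `D`. Hence, away from countably many horizontal and vertical lines (the piece boundaries and
the preimages of the lines `u = 1`, `u = -1 - √2` that cut `D`), the pieces partition `D` and so
do their images.
-/

open Function

section General

variable {α β : Type*}

theorem Set.bijOn_iUnion_of_pairwise_disjoint {ι : Type*} {f : α → β} {s : ι → Set α}
    {t : ι → Set β} (H : ∀ i, BijOn f (s i) (t i)) (ht : Pairwise (Disjoint on t)) :
    BijOn f (⋃ i, s i) (⋃ i, t i) := by
  refine bijOn_iUnion H ?_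
  rintro x ⟨_, ⟨i, rfl⟩, hx⟩ y ⟨_, ⟨j, rfl⟩, hy⟩ hxy
  obtain rfl : i = j := by
    by_contra hij
    exact (ht hij).ne_of_mem ((H i).mapsTo hx) ((H j).mapsTo hy) hxy
  exact (H i).injOn hx hy hxy

theorem Equiv.bijOn_conj (e : α ≃ β) {g : β → β} {s t : Set β} (hg : BijOn g s t) :
    BijOn (e.symm ∘ g ∘ e) (e ⁻¹' s) (e ⁻¹' t) := by
  refine BijOn.comp ?_ (hg.comp e.bijective.bijOn_preimage)
  rw [← e.symm.image_eq_iff_bijOn, e.image_symm_eq_preimage]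

theorem Set.bijOn_add_const_Ioo [AddCommGroup α] [LinearOrder α] [IsOrderedAddMonoid α]
    {a b c a' b' : α} (ha : a + c = a') (hb : b + c = b') :
    BijOn (· + c) (Ioo a b) (Ioo a' b') := by
  rw [← ha, ← hb, ← image_add_const_Ioo]
  exact (add_left_injective c).injOn.bijOn_image

theorem Function.iterate_eq_of_map_eq {f : α → α} {g : ℕ → α} {x : α} {n : ℕ}
    (h₀ : g 0 = x) (h : ∀ k < n, f (g k) = g (k + 1)) : f^[n] x = g n := by
  subst h₀
  induction n with
  | zero => rfl
  | succ n ih =>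
    rw [Function.iterate_succ_apply', ih fun k hk => h k (by omega), h n n.lt_succ_self]

theorem sInf_setOf_iterate_notMem_eq {f : α → α} {S : Set α} {x : α} {n : ℕ}
    (hin : ∀ k, 0 < k → k ≤ n → f^[k] x ∈ S) (hout : f^[n + 1] x ∉ S) :
    sInf {m | 0 < m ∧ f^[m] x ∉ S} = n + 1 := by
  refine le_antisymm (Nat.sInf_le ⟨n.succ_pos, hout⟩)
    (le_csInf ⟨n + 1, n.succ_pos, hout⟩ fun m ⟨hm, hmS⟩ => ?_)
  by_contra! hmn
  exact hmS (hin m hm (by omega))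

theorem exists_nat_mem_Ioo_mul [Field α] [LinearOrder α] [IsStrictOrderedRing α]
    [FloorSemiring α] {c x : α} (hc : 0 < c) (hx : 0 ≤ x) (h : ∀ n : ℕ, x ≠ n * c) :
    ∃ n : ℕ, x ∈ Ioo (n * c) ((n + 1) * c) := by
  refine ⟨⌊x / c⌋₊, ?_, ?_⟩
  · refine (lt_div_iff₀ hc).1 ((Nat.floor_le (div_nonneg hx hc.le)).lt_of_ne fun e => ?_)
    exact h ⌊x / c⌋₊ (by rw [e, div_mul_cancel₀ _ hc.ne'])
  · exact (div_lt_iff₀ hc).1 (Nat.lt_floor_add_one _)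

theorem Nat.eq_of_mem_Ioo_mul [Semiring α] [LinearOrder α] [IsStrictOrderedRing α]
    {c x : α} (hc : 0 ≤ c) {m n : ℕ} (hm : x ∈ Ioo (m * c) ((m + 1) * c))
    (hn : x ∈ Ioo (n * c) ((n + 1) * c)) : m = n := by
  have h₁ : (m : α) < n + 1 := lt_of_mul_lt_mul_right (hm.1.trans hn.2) hc
  have h₂ : (n : α) < m + 1 := lt_of_mul_lt_mul_right (hn.1.trans hm.2) hc
  norm_cast at h₁ h₂
  omega

theorem MeasureTheory.volume_prod_univ_of_countable {s : Set ℝ} (hs : s.Countable) :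
    volume (s ×ˢ (univ : Set ℝ)) = 0 := by
  rw [Measure.volume_eq_prod, Measure.prod_prod, hs.measure_zero, zero_mul]

theorem MeasureTheory.volume_univ_prod_of_countable {s : Set ℝ} (hs : s.Countable) :
    volume ((univ : Set ℝ) ×ˢ s) = 0 := by
  rw [Measure.volume_eq_prod, Measure.prod_prod, hs.measure_zero, mul_zero]

theorem mob_smul {r : ℝ} (hr : r ≠ 0) (M : Matrix (Fin 2) (Fin 2) ℝ) :
    mob (r • M) = mob M := by
  ext x
  simp only [mob, Matrix.smul_apply, smul_eq_mul, mul_assoc, ← mul_add]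
  exact mul_div_mul_left _ _ hr

theorem mob_adjugate_mob {M : Matrix (Fin 2) (Fin 2) ℝ} (hM : M.det ≠ 0) {x : ℝ}
    (hx : M 1 0 * x + M 1 1 ≠ 0) : mob M.adjugate (mob M x) = x := by
  rw [Matrix.det_fin_two] at hM
  simp only [mob, Matrix.adjugate_fin_two, Matrix.of_apply, Matrix.cons_val', Matrix.empty_val',
    Matrix.cons_val_zero, Matrix.cons_val_one, Matrix.cons_val_fin_one]
  generalize M 0 0 = a, M 0 1 = b, M 1 0 = c, M 1 1 = d at *
  have hnum : d * ((a * x + b) / (c * x + d)) + -b = (a * d - b * c) * x / (c * x + d) := by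
    rw [mul_div_assoc', div_add' _ _ _ hx]; ring
  have hden : -c * ((a * x + b) / (c * x + d)) + a = (a * d - b * c) / (c * x + d) := by
    rw [mul_div_assoc', div_add' _ _ _ hx]; ring
  rw [hnum, hden]
  field_simp

theorem mob_mob_adjugate {M : Matrix (Fin 2) (Fin 2) ℝ} (hM : M.det ≠ 0) {y : ℝ}
    (hy : -M 1 0 * y + M 0 0 ≠ 0) : mob M (mob M.adjugate y) = y := by
  have h := mob_adjugate_mob (M := M.adjugate) (x := y)
    (by rwa [Matrix.det_adjugate, Fintype.card_fin, pow_one])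
    (by simpa [Matrix.adjugate_fin_two] using hy)
  rwa [Matrix.adjugate_adjugate', Fintype.card_fin, pow_zero, one_smul] at h

theorem mob_bijOn {M : Matrix (Fin 2) (Fin 2) ℝ} (hM : M.det ≠ 0) {s t : Set ℝ}
    (hs : ∀ x ∈ s, M 1 0 * x + M 1 1 ≠ 0) (ht : ∀ y ∈ t, -M 1 0 * y + M 0 0 ≠ 0)
    (hst : MapsTo (mob M) s t) (hts : MapsTo (mob M.adjugate) t s) : BijOn (mob M) s t :=
  InvOn.bijOn ⟨fun x hx => mob_adjugate_mob hM (hs x hx),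
    fun y hy => mob_mob_adjugate hM (ht y hy)⟩ hst hts

end General

local notation "σ" => Real.sqrt 2
local notation "Λ" => (1 + Real.sqrt 2 : ℝ)
local notation "τ" => (2 + 2 * Real.sqrt 2 : ℝ)

/-- On `Σ₁` the Farey map is parabolic with fixed point `1 + √2`; in this coordinate it is the
translation by `1` (`mob_gam_mul_nu_one`). Because `x / 0 = 0`, the formula is a bijection of the
whole line, exchanging `1 + √2` and `0`. -/
def sector1Coord : ℝ ≃ ℝ where
  toFun x := σ / (x - Λ)
  invFun y := Λ + σ / y
  left_inv x := by simp [div_div_cancel₀ (Real.sqrt_ne_zero'.2 two_pos)]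
  right_inv y := by simp [div_div_cancel₀ (Real.sqrt_ne_zero'.2 two_pos)]

def sector1Shift (k x : ℝ) : ℝ := sector1Coord.symm (sector1Coord x + k)

theorem sector1Coord_apply (x : ℝ) : sector1Coord x = σ / (x - Λ) := rfl

theorem sector1Coord_symm_apply (y : ℝ) : sector1Coord.symm y = Λ + σ / y := rfl

@[simp]
theorem sector1Coord_sector1Shift (k x : ℝ) :
    sector1Coord (sector1Shift k x) = sector1Coord x + k := by
  simp [sector1Shift]

@[simp] theorem sector1Shift_zero (x : ℝ) : sector1Shift 0 x = x := by simp [sector1Shift]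

theorem sector1Shift_sector1Shift (k l x : ℝ) :
    sector1Shift l (sector1Shift k x) = sector1Shift (k + l) x := by
  simp [sector1Shift, add_assoc]

theorem sector1Coord_lt_neg_one_iff {x : ℝ} : sector1Coord x < -1 ↔ x ∈ Ioo 1 Λ := by
  have hσ : (0 : ℝ) < σ := by positivity
  rw [sector1Coord_apply, mem_Ioo]
  rcases lt_trichotomy x Λ with h | rfl | h
  · rw [div_lt_iff_of_neg (by linarith)]
    constructor
    · intro; constructor <;> linarith
    · intro; linarith
  · simp
  · have : 0 < σ / (x - Λ) := div_pos hσ (by linarith)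
    constructor <;> intro <;> linarith

theorem sector1Coord_mem_Ioo_neg_one_zero_iff {x : ℝ} :
    sector1Coord x ∈ Ioo (-1) 0 ↔ x < 1 := by
  have hσ : (0 : ℝ) < σ := by positivity
  rw [sector1Coord_apply, mem_Ioo]
  rcases lt_trichotomy x Λ with h | rfl | h
  · rw [lt_div_iff_of_neg (by linarith)]
    have : σ / (x - Λ) < 0 := div_neg_of_pos_of_neg hσ (by linarith)
    constructor
    · intro; linarith
    · intro; constructor <;> linarith
  · simp
  · have : 0 < σ / (x - Λ) := div_pos hσ (by linarith)
    constructor <;> intro <;> linarith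

theorem sector1Coord_mem_Ioo_zero_one_iff {x : ℝ} :
    sector1Coord x ∈ Ioo 0 1 ↔ Λ + σ < x := by
  have hσ : (0 : ℝ) < σ := by positivity
  rw [sector1Coord_apply, mem_Ioo]
  rcases lt_trichotomy x Λ with h | rfl | h
  · have : σ / (x - Λ) < 0 := div_neg_of_pos_of_neg hσ (by linarith)
    constructor <;> intro <;> linarith
  · simp
  · rw [div_lt_one (by linarith)]
    have : 0 < σ / (x - Λ) := div_pos hσ (by linarith)
    constructor
    · intro; linarith
    · intro; constructor <;> linarith

theorem one_lt_sector1Coord_iff {x : ℝ} : 1 < sector1Coord x ↔ x ∈ Ioo Λ (Λ + σ) := by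
  have hσ : (0 : ℝ) < σ := by positivity
  rw [sector1Coord_apply, mem_Ioo]
  rcases lt_trichotomy x Λ with h | rfl | h
  · have : σ / (x - Λ) < 0 := div_neg_of_pos_of_neg hσ (by linarith)
    constructor <;> intro <;> linarith
  · simp
  · rw [one_lt_div (by linarith)]
    constructor
    · intro; constructor <;> linarith
    · intro; linarith

theorem sector1Coord_pos_iff {x : ℝ} : 0 < sector1Coord x ↔ Λ < x := by
  rw [sector1Coord_apply, div_pos_iff_of_pos_left (by positivity), sub_pos]

theorem sectorIndex_eq_one {x : ℝ} (h : x ∈ Ioo 1 Λ) : sectorIndex x = 1 := by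
  rw [sectorIndex, if_neg h.2.le.not_gt, if_pos h.1]

theorem sectorIndex_eq_seven {x : ℝ} (h : x ≤ -Λ) : sectorIndex x = 7 := by
  have := Real.one_lt_sqrt_two
  simp only [sectorIndex]
  split_ifs <;> first | rfl | linarith

theorem F_eq_mob {x : ℝ} (h : sectorIndex x ≠ 0) : F x = mob (gam * nu (sectorIndex x)) x := by
  rw [F, if_neg h]

theorem Fhat_eq_mob {p : ℝ × ℝ} (h : sectorIndex p.1 ≠ 0) :
    Fhat p = (F p.1, mob (gam * nu (sectorIndex p.1)) p.2) := by
  rw [Fhat, if_neg h, F_eq_mob h]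

theorem nG_of_mem_Ioc {u : ℝ} (h : u ∈ Ioc 1 Λ) : nG u = n1 u := by
  rw [nG, if_pos h]

theorem nG_of_le {u : ℝ} (h : u ≤ -Λ) : nG u = n7 u := by
  have := Real.one_lt_sqrt_two
  rw [nG, if_neg fun h' => by linarith [h'.1], if_pos (mem_Iic.2 h)]

theorem nG_of_mem_Ioo {u : ℝ} (h : u ∈ Ioo (-Λ) 1) : nG u = 1 := by
  have := Real.one_lt_sqrt_two
  rw [nG, if_neg fun h' => by linarith [h'.1, h.2],
    if_neg fun h' => by linarith [h.1, mem_Iic.1 h'], if_pos (by linarith [h.2])]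

theorem mob_gam_mul_nu_seven (x : ℝ) : mob (gam * nu 7) x = x + τ := by
  simp [mob, gam, nu]

theorem mob_gam_mul_nu_one {x : ℝ} (h₁ : x ≠ 1) (hΛ : x ≠ Λ) :
    mob (gam * nu 1) x = sector1Shift 1 x := by
  have h₁' : x - 1 ≠ 0 := sub_ne_zero.2 h₁
  have hΛ' : x - Λ ≠ 0 := sub_ne_zero.2 hΛ
  have hσ := Real.sqrt_ne_zero'.2 two_pos
  rw [show nu 1 = σ⁻¹ • !![1, 1; 1, -1] from rfl, Matrix.mul_smul, mob_smul (inv_ne_zero hσ)]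
  simp only [mob, gam, Matrix.mul_fin_two, sector1Shift, sector1Coord_apply,
    sector1Coord_symm_apply, Matrix.of_apply, Matrix.cons_val', Matrix.cons_val_zero,
    Matrix.cons_val_one, Matrix.empty_val', Matrix.cons_val_fin_one]
  have e : σ / (x - Λ) + 1 = (x - 1) / (x - Λ) := by field_simp; ring
  rw [e, div_div_eq_mul_div, show ((0 : ℝ) * 1 + 1 * 1) * x + (0 * 1 + 1 * -1) = x - 1 by ring]
  field_simp
  linear_combination Real.mul_self_sqrt zero_le_two

theorem F_sector1Shift {u k : ℝ} (h : sector1Coord u + k < -1) :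
    F (sector1Shift k u) = sector1Shift (k + 1) u := by
  have hx := sector1Coord_lt_neg_one_iff.1 (by rwa [sector1Coord_sector1Shift])
  rw [F_eq_mob (by rw [sectorIndex_eq_one hx]; decide), sectorIndex_eq_one hx,
    mob_gam_mul_nu_one hx.1.ne' hx.2.ne, sector1Shift_sector1Shift]

theorem Fhat_sector1Shift {u v k : ℝ} (hu : sector1Coord u + k < -1)
    (hv : 0 < sector1Coord v + k) :
    Fhat (sector1Shift k u, sector1Shift k v) =
      (sector1Shift (k + 1) u, sector1Shift (k + 1) v) := by
  have hx := sector1Coord_lt_neg_one_iff.1 (by rwa [sector1Coord_sector1Shift])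
  have hy := sector1Coord_pos_iff.1 (by rwa [sector1Coord_sector1Shift])
  have := Real.one_lt_sqrt_two
  rw [Fhat_eq_mob (by rw [sectorIndex_eq_one hx]; decide), F_sector1Shift hu,
    sectorIndex_eq_one hx, mob_gam_mul_nu_one (by linarith) hy.ne', sector1Shift_sector1Shift]

theorem n1_eq {u : ℝ} {n : ℕ} (h : sector1Coord u ∈ Ioo (-(n + 2 : ℝ)) (-(n + 1))) :
    n1 u = n + 1 := by
  have hF : ∀ k ≤ n + 1, F^[k] u = sector1Shift k u := fun k hk =>
    Function.iterate_eq_of_map_eq (g := fun k : ℕ => sector1Shift k u) (by simp) fun i hi => by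
      have : (i : ℝ) + 1 ≤ n + 1 := by exact_mod_cast (by omega : i + 1 ≤ n + 1)
      push_cast
      exact F_sector1Shift (by linarith [h.2])
  refine sInf_setOf_iterate_notMem_eq (fun k _ hkn => ?_) ?_
  · have : (k : ℝ) ≤ n := by exact_mod_cast hkn
    rw [hF k (by omega)]
    exact Ioo_subset_Ioc_self
      (sector1Coord_lt_neg_one_iff.1 (by rw [sector1Coord_sector1Shift]; linarith [h.2]))
  · rw [hF _ le_rfl]
    have := (sector1Coord_mem_Ioo_neg_one_zero_iff (x := sector1Shift (n + 1 : ℕ) u)).1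
      (by rw [sector1Coord_sector1Shift]; push_cast; constructor <;> linarith [h.1, h.2])
    exact fun hmem => by linarith [hmem.1]

theorem Ghat_sector1 {p : ℝ × ℝ} {n : ℕ}
    (hu : sector1Coord p.1 ∈ Ioo (-(n + 2 : ℝ)) (-(n + 1))) (hv : 0 < sector1Coord p.2) :
    Ghat p = (sector1Shift (n + 1) p.1, sector1Shift (n + 1) p.2) := by
  have hp : p.1 ∈ Ioc 1 Λ :=
    Ioo_subset_Ioc_self (sector1Coord_lt_neg_one_iff.1 (by linarith [hu.2]))
  rw [Ghat, nG_of_mem_Ioc hp, n1_eq hu]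
  have := Function.iterate_eq_of_map_eq (f := Fhat) (n := n + 1) (x := p)
    (g := fun k : ℕ => (sector1Shift k p.1, sector1Shift k p.2)) (by simp) fun i hi => by
      have : (i : ℝ) + 1 ≤ n + 1 := by exact_mod_cast hi
      push_cast
      exact Fhat_sector1Shift (by linarith [hu.2]) (by positivity)
  simpa using this

theorem F_sector7 {x : ℝ} (h : x ≤ -Λ) : F x = x + τ := by
  rw [F_eq_mob (by rw [sectorIndex_eq_seven h]; decide), sectorIndex_eq_seven h,
    mob_gam_mul_nu_seven]

theorem Fhat_sector7 {p : ℝ × ℝ} (h : p.1 ≤ -Λ) : Fhat p = (p.1 + τ, p.2 + τ) := by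
  rw [Fhat_eq_mob (by rw [sectorIndex_eq_seven h]; decide), F_sector7 h, sectorIndex_eq_seven h,
    mob_gam_mul_nu_seven]

theorem add_nat_mul_le_of_mem_Ioo {u : ℝ} {n k : ℕ}
    (h : u ∈ Ioo (-Λ - (n + 1) * τ) (-Λ - n * τ)) (hk : k ≤ n) : u + k * τ ≤ -Λ := by
  have : (k : ℝ) * τ ≤ n * τ := by gcongr
  linarith [h.2]

theorem n7_eq {u : ℝ} {n : ℕ} (h : u ∈ Ioo (-Λ - (n + 1) * τ) (-Λ - n * τ)) :
    n7 u = n + 1 := by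
  have hF : ∀ k ≤ n + 1, F^[k] u = u + k * τ := fun k hk =>
    Function.iterate_eq_of_map_eq (g := fun k : ℕ => u + k * τ) (by simp) fun i hi => by
      push_cast
      rw [F_sector7 (add_nat_mul_le_of_mem_Ioo h (by omega))]
      ring
  refine sInf_setOf_iterate_notMem_eq (fun k _ hkn => ?_) ?_
  · rw [hF k (by omega)]
    exact add_nat_mul_le_of_mem_Ioo h hkn
  · rw [hF _ le_rfl, mem_Iic, not_le]
    push_cast
    linarith [h.1]

theorem Ghat_sector7 {p : ℝ × ℝ} {n : ℕ}
    (h : p.1 ∈ Ioo (-Λ - (n + 1) * τ) (-Λ - n * τ)) :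
    Ghat p = (p.1 + (n + 1) * τ, p.2 + (n + 1) * τ) := by
  have hp : p.1 ≤ -Λ := by simpa using add_nat_mul_le_of_mem_Ioo h (Nat.zero_le n)
  rw [Ghat, nG_of_le hp, n7_eq h]
  have := Function.iterate_eq_of_map_eq (f := Fhat) (n := n + 1) (x := p)
    (g := fun k : ℕ => (p.1 + k * τ, p.2 + k * τ)) (by simp) fun i hi => by
      rw [Fhat_sector7 (add_nat_mul_le_of_mem_Ioo h (by omega))]
      push_cast
      ring_nf
  simpa using this

/-- `gam * nu j` up to a nonzero scalar, normalised to lower left entry `1`. -/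
def sectorMat : ℕ → Matrix (Fin 2) (Fin 2) ℝ
  | 2 => !![3 + 2 * σ, -(1 + 2 * σ); 1, -1]
  | 3 => !![2 + 2 * σ, -1; 1, 0]
  | 4 => !![2 + 2 * σ, 1; 1, 0]
  | 5 => !![3 + 2 * σ, 1 + 2 * σ; 1, 1]
  | 6 => !![1 + 2 * σ, 3 + 2 * σ; 1, 1]
  | _ => 1

def sectorLeft : ℕ → ℝ
  | 2 => σ - 1 | 3 => 0 | 4 => 1 - σ | 5 => -1 | 6 => -Λ | _ => 0

def sectorRight : ℕ → ℝ
  | 2 => 1 | 3 => σ - 1 | 4 => 0 | 5 => 1 - σ | 6 => -1 | _ => 0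

def stripLo : ℕ → ℝ
  | 2 => 3 + 2 * σ | 3 => 3 + σ | 4 => 2 + 2 * σ | 5 => 1 + 3 * σ | 6 => 1 + 2 * σ | _ => 0

def stripHi : ℕ → ℝ
  | 2 => 3 + 3 * σ | 3 => 2 + 2 * σ | 4 => 1 + 3 * σ | 5 => 3 + 2 * σ | 6 => 3 + σ | _ => 0

theorem gam_mul_nu_eq_smul_sectorMat {j : ℕ} (h₂ : 2 ≤ j) (h₆ : j ≤ 6) :
    ∃ c ≠ (0 : ℝ), gam * nu j = c • sectorMat j := by
  have hσ := Real.sqrt_ne_zero'.2 two_pos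
  interval_cases j
  · refine ⟨-σ⁻¹, by simp [hσ], ?_⟩
    ext i k; fin_cases i <;> fin_cases k <;> simp [gam, nu, sectorMat] <;> ring
  · refine ⟨1, one_ne_zero, ?_⟩
    ext i k; fin_cases i <;> fin_cases k <;> simp [gam, nu, sectorMat]
  · refine ⟨-1, by norm_num, ?_⟩
    ext i k; fin_cases i <;> fin_cases k <;> simp [gam, nu, sectorMat]
  · refine ⟨σ⁻¹, by simp [hσ], ?_⟩
    ext i k; fin_cases i <;> fin_cases k <;> simp [gam, nu, sectorMat] <;> ring
  · refine ⟨-σ⁻¹, by simp [hσ], ?_⟩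
    ext i k; fin_cases i <;> fin_cases k <;> simp [gam, nu, sectorMat] <;> ring

theorem sectorMat_bijOn {j : ℕ} (h₂ : 2 ≤ j) (h₆ : j ≤ 6) :
    BijOn (mob (sectorMat j)) (Ioo (sectorLeft j) (sectorRight j)) (Iio Λ) ∧
      BijOn (mob (sectorMat j)) (Ioi Λ) (Ioo (stripLo j) (stripHi j)) := by
  have := Real.one_lt_sqrt_two
  have := Real.sqrt_two_lt_three_halves
  have := Real.mul_self_sqrt zero_le_two
  interval_cases j
  all_goals
    refine ⟨?_, ?_⟩ <;>
    refine mob_bijOn (by norm_num [sectorMat, Matrix.det_fin_two_of]) ?_ ?_ ?_ ?_ <;>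
    simp only [sectorMat, sectorLeft, sectorRight, stripLo, stripHi, MapsTo, mob, mem_Ioo,
      mem_Iio, mem_Ioi, Matrix.adjugate_fin_two_of, Matrix.of_apply, Matrix.cons_val',
      Matrix.cons_val_zero, Matrix.cons_val_one, Matrix.empty_val', Matrix.cons_val_fin_one]
  -- What is left are inequalities between linear fractional expressions in `√2` whose
  -- denominators have a fixed sign on the relevant interval.
  all_goals
    intro x
    intros
    try refine ⟨?_, ?_⟩
  all_goals first
    | intro h; nlinarith
    | rw [div_lt_iff₀ (by linarith)]; nlinarith
    | rw [div_lt_iff_of_neg (by linarith)]; nlinarith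
    | rw [lt_div_iff₀ (by linarith)]; nlinarith
    | rw [lt_div_iff_of_neg (by linarith)]; nlinarith

theorem sectorIndex_eq_of_mem_sector {j : ℕ} (h₂ : 2 ≤ j) (h₆ : j ≤ 6) {x : ℝ}
    (h : x ∈ Ioo (sectorLeft j) (sectorRight j)) : sectorIndex x = j := by
  have := Real.one_lt_sqrt_two
  have := Real.sqrt_two_lt_three_halves
  obtain ⟨hl, hr⟩ := h
  interval_cases j <;> simp only [sectorLeft, sectorRight] at hl hr <;>
    simp only [sectorIndex] <;> split_ifs <;> first | rfl | linarith

theorem sector_subset_Ioo {j : ℕ} (h₂ : 2 ≤ j) (h₆ : j ≤ 6) :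
    Ioo (sectorLeft j) (sectorRight j) ⊆ Ioo (-Λ) 1 := by
  have := Real.one_lt_sqrt_two
  have := Real.sqrt_two_lt_three_halves
  rintro x ⟨hl, hr⟩
  interval_cases j <;> simp only [sectorLeft, sectorRight] at hl hr <;> constructor <;> linarith

theorem Ghat_middle {j : ℕ} (h₂ : 2 ≤ j) (h₆ : j ≤ 6) {p : ℝ × ℝ}
    (h : p.1 ∈ Ioo (sectorLeft j) (sectorRight j)) :
    Ghat p = (mob (sectorMat j) p.1, mob (sectorMat j) p.2) := by
  obtain ⟨c, hc, hM⟩ := gam_mul_nu_eq_smul_sectorMat h₂ h₆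
  have hj := sectorIndex_eq_of_mem_sector h₂ h₆ h
  rw [Ghat, nG_of_mem_Ioo (sector_subset_Ioo h₂ h₆ h), Function.iterate_one,
    Fhat_eq_mob (by omega), F_eq_mob (by omega), hj, hM, mob_smul hc]

theorem add_sqrt_two_le_stripLo {j : ℕ} (h₂ : 2 ≤ j) (h₆ : j ≤ 6) :
    Λ + σ ≤ stripLo j := by
  have := Real.one_lt_sqrt_two
  have := Real.sqrt_two_lt_three_halves
  interval_cases j <;> simp only [stripLo] <;> linarith

theorem stripHi_le {j : ℕ} (h₂ : 2 ≤ j) (h₆ : j ≤ 6) : stripHi j ≤ Λ + τ := by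
  have := Real.one_lt_sqrt_two
  have := Real.sqrt_two_lt_three_halves
  interval_cases j <;> simp only [stripHi] <;> linarith

theorem mem_Dgauss_iff {p : ℝ × ℝ} : p ∈ Dgauss ↔
    (p.1 ∈ Ioo 1 Λ ∧ Λ + σ < p.2) ∨ (p.1 ∈ Ioo (-Λ) 1 ∧ Λ < p.2) ∨
      (p.1 < -Λ ∧ p.2 ∈ Ioo Λ (Λ + τ)) := by
  simp only [Dgauss, mem_union, mem_prod, mem_Ioi, mem_Iio, mem_Ioo, or_assoc]
  ring_nf

/-- `sector1 n` (`sector7 n`) consists of the points of `Σ₁` (`Σ₇`) that leave the sector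
after exactly `n + 1` steps of `F`. -/
inductive Piece
  | sector1 (n : ℕ)
  | middle (j : ℕ) (h₂ : 2 ≤ j) (h₆ : j ≤ 6)
  | sector7 (n : ℕ)

namespace Piece

instance : Countable Piece := by
  refine Function.Injective.countable (f := fun i : Piece => match i with
    | sector1 n => (Sum.inl n : ℕ ⊕ ℕ ⊕ ℕ)
    | middle j _ _ => Sum.inr (Sum.inl j)
    | sector7 n => Sum.inr (Sum.inr n)) ?_
  rintro (n | ⟨j, _, _⟩ | n) (m | ⟨k, _, _⟩ | m) h <;> simp_all

def map : Piece → ℝ → ℝ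
  | sector1 n => sector1Shift (n + 1)
  | middle j _ _ => mob (sectorMat j)
  | sector7 n => (· + (n + 1) * τ)

def uDom : Piece → Set ℝ
  | sector1 n => sector1Coord ⁻¹' Ioo (-(n + 2)) (-(n + 1))
  | middle j _ _ => Ioo (sectorLeft j) (sectorRight j)
  | sector7 n => Ioo (-Λ - (n + 1) * τ) (-Λ - n * τ)

def uImg : Piece → Set ℝ
  | sector1 _ => sector1Coord ⁻¹' Ioo (-1) 0
  | middle _ _ _ => Iio Λ
  | sector7 _ => Ioo (-Λ) Λ

def vDom : Piece → Set ℝ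
  | sector1 _ => sector1Coord ⁻¹' Ioo 0 1
  | middle _ _ _ => Ioi Λ
  | sector7 _ => Ioo Λ (Λ + τ)

def vImg : Piece → Set ℝ
  | sector1 n => sector1Coord ⁻¹' Ioo (n + 1) (n + 2)
  | middle j _ _ => Ioo (stripLo j) (stripHi j)
  | sector7 n => Ioo (Λ + (n + 1) * τ) (Λ + (n + 2) * τ)

theorem bijOn_uDom : ∀ i : Piece, BijOn i.map i.uDom i.uImg
  | sector1 _ => sector1Coord.bijOn_conj (bijOn_add_const_Ioo (by ring) (by ring))
  | middle _ h₂ h₆ => (sectorMat_bijOn h₂ h₆).1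
  | sector7 _ => bijOn_add_const_Ioo (by ring) (by ring)

theorem bijOn_vDom : ∀ i : Piece, BijOn i.map i.vDom i.vImg
  | sector1 _ => sector1Coord.bijOn_conj (bijOn_add_const_Ioo (by ring) (by ring))
  | middle _ h₂ h₆ => (sectorMat_bijOn h₂ h₆).2
  | sector7 _ => bijOn_add_const_Ioo (by ring) (by ring)

theorem Ghat_eqOn : ∀ i : Piece, EqOn Ghat (Prod.map i.map i.map) (i.uDom ×ˢ i.vDom)
  | sector1 _ => fun _ hp => Ghat_sector1 hp.1 hp.2.1
  | middle _ h₂ h₆ => fun _ hp => Ghat_middle h₂ h₆ hp.1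
  | sector7 _ => fun _ hp => Ghat_sector7 hp.1

theorem uDom_prod_vDom_subset : ∀ i : Piece, i.uDom ×ˢ i.vDom ⊆ Dgauss
  | sector1 _ => fun _ ⟨hu, hv⟩ => mem_Dgauss_iff.2 <| Or.inl
      ⟨sector1Coord_lt_neg_one_iff.1 (by linarith [hu.2]),
        sector1Coord_mem_Ioo_zero_one_iff.1 hv⟩
  | middle _ h₂ h₆ => fun _ ⟨hu, hv⟩ => mem_Dgauss_iff.2 <| Or.inr <| Or.inl
      ⟨sector_subset_Ioo h₂ h₆ hu, hv⟩
  | sector7 n => fun _ ⟨hu, hv⟩ => mem_Dgauss_iff.2 <| Or.inr <| Or.inr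
      ⟨by have : 0 ≤ (n : ℝ) * τ := by positivity
          linarith [hu.2], hv⟩

theorem uImg_prod_vImg_subset : ∀ i : Piece, (i.uImg \ {1, -Λ}) ×ˢ i.vImg ⊆ Dgauss
  | sector1 n => by
    rintro p ⟨⟨hu, hne⟩, hv⟩
    have hu := sector1Coord_mem_Ioo_neg_one_zero_iff.1 hu
    have hv := one_lt_sector1Coord_iff.1 (by linarith [hv.1] : 1 < sector1Coord p.2)
    simp only [mem_insert_iff, mem_singleton_iff, not_or] at hne
    rcases lt_or_gt_of_ne hne.2 with h | h
    · exact mem_Dgauss_iff.2 <| Or.inr <| Or.inr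
        ⟨h, hv.1, by linarith [hv.2, Real.one_lt_sqrt_two]⟩
    · exact mem_Dgauss_iff.2 <| Or.inr <| Or.inl ⟨⟨h, hu⟩, hv.1⟩
  | middle j h₂ h₆ => by
    rintro p ⟨⟨hu, hne⟩, hv⟩
    simp only [mem_insert_iff, mem_singleton_iff, not_or] at hne
    have hlo := add_sqrt_two_le_stripLo h₂ h₆
    have hhi := stripHi_le h₂ h₆
    rcases lt_or_gt_of_ne hne.2 with h | h
    · exact mem_Dgauss_iff.2 <| Or.inr <| Or.inr
        ⟨h, by linarith [hv.1, Real.one_lt_sqrt_two], by linarith [hv.2]⟩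
    rcases lt_or_gt_of_ne hne.1 with h' | h'
    · exact mem_Dgauss_iff.2 <| Or.inr <| Or.inl
        ⟨⟨h, h'⟩, by linarith [hv.1, Real.one_lt_sqrt_two]⟩
    · exact mem_Dgauss_iff.2 <| Or.inl ⟨⟨h', hu⟩, by linarith [hv.1]⟩
  | sector7 n => by
    rintro p ⟨⟨hu, hne⟩, hv⟩
    simp only [mem_insert_iff, mem_singleton_iff, not_or] at hne
    have : Λ + τ ≤ p.2 := by
      have : 0 ≤ (n : ℝ) * τ := by positivity
      linarith [hv.1]
    rcases lt_or_gt_of_ne hne.1 with h | h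
    · exact mem_Dgauss_iff.2 <| Or.inr <| Or.inl
        ⟨⟨hu.1, h⟩, by linarith [Real.one_lt_sqrt_two]⟩
    · exact mem_Dgauss_iff.2 <| Or.inl ⟨⟨h, hu.2⟩, by linarith [Real.one_lt_sqrt_two]⟩

theorem lt_of_mem_vImg_sector1 {n : ℕ} {v : ℝ} (hv : v ∈ (sector1 n).vImg) : v < Λ + σ :=
  (one_lt_sector1Coord_iff.1 (by have := hv.1; have : (0 : ℝ) ≤ n := n.cast_nonneg; linarith)).2

theorem lt_of_mem_vImg_sector7 {n : ℕ} {v : ℝ} (hv : v ∈ (sector7 n).vImg) : Λ + τ < v := by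
  have := hv.1
  have : 0 ≤ (n : ℝ) * τ := by positivity
  nlinarith [Real.one_lt_sqrt_two]

theorem pairwise_disjoint_vImg : Pairwise (Disjoint on vImg) := by
  have := Real.one_lt_sqrt_two
  have := Real.sqrt_two_lt_three_halves
  intro i i' hne
  refine Set.disjoint_left.2 fun v hv hv' => hne ?_
  rcases i with n | ⟨j, h₂, h₆⟩ | n <;> rcases i' with n' | ⟨j', h₂', h₆'⟩ | n'
  · congr
    refine Nat.eq_of_mem_Ioo_mul zero_le_one (x := sector1Coord v - 1) ?_ ?_ <;>
      [have := hv; have := hv'] <;> constructor <;> linarith [this.1, this.2]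
  · linarith [lt_of_mem_vImg_sector1 hv, add_sqrt_two_le_stripLo h₂' h₆', hv'.1]
  · linarith [lt_of_mem_vImg_sector1 hv, lt_of_mem_vImg_sector7 hv']
  · linarith [lt_of_mem_vImg_sector1 hv', add_sqrt_two_le_stripLo h₂ h₆, hv.1]
  · obtain ⟨hv₁, hv₂⟩ := hv
    obtain ⟨hv₁', hv₂'⟩ := hv'
    interval_cases j <;> interval_cases j' <;>
      first | rfl | (simp only [stripLo, stripHi] at hv₁ hv₂ hv₁' hv₂'; linarith)
  · linarith [lt_of_mem_vImg_sector7 hv', stripHi_le h₂ h₆, hv.2]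
  · linarith [lt_of_mem_vImg_sector1 hv', lt_of_mem_vImg_sector7 hv]
  · linarith [lt_of_mem_vImg_sector7 hv, stripHi_le h₂' h₆', hv'.2]
  · congr
    refine Nat.eq_of_mem_Ioo_mul (c := τ) (x := v - Λ - τ) (by positivity) ?_ ?_ <;>
      [have := hv; have := hv'] <;> constructor <;> linarith [this.1, this.2]

end Piece

def uBoundary : Set ℝ :=
  range (fun n : ℕ => sector1Coord.symm (-(n + 1))) ∪ {σ - 1, 0, 1 - σ, -1} ∪
    range (fun n : ℕ => -Λ - n * τ)

def vBoundary : Set ℝ :=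
  range (fun n : ℕ => sector1Coord.symm (n + 1)) ∪
    {3 + σ, 2 + 2 * σ, 1 + 3 * σ, 3 + 2 * σ} ∪ range (fun n : ℕ => Λ + (n + 1) * τ)

theorem uBoundary_countable : uBoundary.Countable :=
  ((countable_range _).union (toFinite _).countable).union (countable_range _)

theorem vBoundary_countable : vBoundary.Countable :=
  ((countable_range _).union (toFinite _).countable).union (countable_range _)

namespace Piece

theorem exists_middle_mem_uDom {u : ℝ} (hu : u ∈ Ioo (-Λ) 1)
    (hne : u ∉ ({σ - 1, 0, 1 - σ, -1} : Set ℝ)) :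
    ∃ j h₂ h₆, u ∈ (middle j h₂ h₆).uDom := by
  simp only [mem_insert_iff, mem_singleton_iff, not_or] at hne
  obtain ⟨h₁, h₂, h₃, h₄⟩ := hne
  rcases lt_or_gt_of_ne h₄ with h | h
  · exact ⟨6, by norm_num, le_rfl, hu.1, h⟩
  rcases lt_or_gt_of_ne h₃ with h' | h'
  · exact ⟨5, by norm_num, by norm_num, h, h'⟩
  rcases lt_or_gt_of_ne h₂ with h'' | h''
  · exact ⟨4, by norm_num, by norm_num, h', h''⟩
  rcases lt_or_gt_of_ne h₁ with h''' | h'''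
  · exact ⟨3, by norm_num, by norm_num, h'', h'''⟩
  · exact ⟨2, le_rfl, by norm_num, h''', hu.2⟩

theorem exists_middle_mem_vImg {v : ℝ} (hv : v ∈ Ioo (Λ + σ) (Λ + τ))
    (hne : v ∉ ({3 + σ, 2 + 2 * σ, 1 + 3 * σ, 3 + 2 * σ} : Set ℝ)) :
    ∃ j h₂ h₆, v ∈ (middle j h₂ h₆).vImg := by
  simp only [mem_insert_iff, mem_singleton_iff, not_or] at hne
  obtain ⟨h₁, h₂, h₃, h₄⟩ := hne
  rcases lt_or_gt_of_ne h₁ with h | h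
  · exact ⟨6, by norm_num, le_rfl, by simp only [stripLo]; linarith [hv.1], h⟩
  rcases lt_or_gt_of_ne h₂ with h' | h'
  · exact ⟨3, by norm_num, by norm_num, h, h'⟩
  rcases lt_or_gt_of_ne h₃ with h'' | h''
  · exact ⟨4, by norm_num, by norm_num, h', h''⟩
  rcases lt_or_gt_of_ne h₄ with h''' | h'''
  · exact ⟨5, by norm_num, by norm_num, h'', h'''⟩
  · exact ⟨2, le_rfl, by norm_num, h''', by simp only [stripHi]; linarith [hv.2]⟩

theorem Dgauss_subset_iUnion_uDom_prod_vDom :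
    Dgauss ⊆ (⋃ i : Piece, i.uDom ×ˢ i.vDom) ∪ uBoundary ×ˢ univ := by
  intro p hp
  by_cases hb : p.1 ∈ uBoundary
  · exact Or.inr ⟨hb, trivial⟩
  refine Or.inl (mem_iUnion.2 ?_)
  simp only [uBoundary, mem_union, mem_range, not_or, not_exists] at hb
  obtain ⟨⟨hb₁, hb₂⟩, hb₇⟩ := hb
  rcases mem_Dgauss_iff.1 hp with ⟨hu, hv⟩ | ⟨hu, hv⟩ | ⟨hu, hv⟩
  · have := sector1Coord_lt_neg_one_iff.2 hu
    obtain ⟨n, hn⟩ := exists_nat_mem_Ioo_mul zero_lt_one (x := -sector1Coord p.1 - 1)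
      (by linarith) fun n e => hb₁ n (sector1Coord.symm_apply_eq.2 (by linarith))
    simp only [mul_one] at hn
    exact ⟨sector1 n, ⟨by linarith [hn.2], by linarith [hn.1]⟩,
      sector1Coord_mem_Ioo_zero_one_iff.2 hv⟩
  · obtain ⟨j, h₂, h₆, hj⟩ := exists_middle_mem_uDom hu hb₂
    exact ⟨middle j h₂ h₆, hj, hv⟩
  · obtain ⟨n, hn⟩ := exists_nat_mem_Ioo_mul (c := τ) (x := -Λ - p.1) (by positivity)
      (by linarith) fun n e => hb₇ n (by linarith)
    exact ⟨sector7 n, ⟨by linarith [hn.2], by linarith [hn.1]⟩, hv⟩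

theorem Dgauss_subset_iUnion_uImg_prod_vImg :
    Dgauss ⊆ (⋃ i : Piece, i.uImg ×ˢ i.vImg) ∪ univ ×ˢ vBoundary := by
  intro p hp
  by_cases hb : p.2 ∈ vBoundary
  · exact Or.inr ⟨trivial, hb⟩
  refine Or.inl (mem_iUnion.2 ?_)
  simp only [vBoundary, mem_union, mem_range, not_or, not_exists] at hb
  obtain ⟨⟨hb₁, hb₂⟩, hb₇⟩ := hb
  have := Real.one_lt_sqrt_two
  have hD := mem_Dgauss_iff.1 hp
  have hv : Λ < p.2 := by rcases hD with ⟨_, h⟩ | ⟨_, h⟩ | ⟨_, h, _⟩ <;> linarith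
  rcases lt_or_gt_of_ne (fun e => hb₁ 0 (by simp [sector1Coord_symm_apply, e]) : p.2 ≠ Λ + σ)
    with hσ | hσ
  · have hu : p.1 < 1 := by
      rcases hD with ⟨_, h⟩ | ⟨h, _⟩ | ⟨h, _⟩
      · linarith
      · exact h.2
      · linarith
    have := one_lt_sector1Coord_iff.2 ⟨hv, hσ⟩
    obtain ⟨n, hn⟩ := exists_nat_mem_Ioo_mul zero_lt_one (x := sector1Coord p.2 - 1)
      (by linarith) fun n e => hb₁ n (sector1Coord.symm_apply_eq.2 (by linarith))
    simp only [mul_one] at hn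
    exact ⟨sector1 n, sector1Coord_mem_Ioo_neg_one_zero_iff.2 hu,
      ⟨by linarith [hn.1], by linarith [hn.2]⟩⟩
  have hu : p.1 < Λ := by
    rcases hD with ⟨h, _⟩ | ⟨h, _⟩ | ⟨h, _⟩
    · exact h.2
    · linarith [h.2]
    · linarith
  rcases lt_or_gt_of_ne (fun e => hb₇ 0 (by simp [e]) : p.2 ≠ Λ + τ) with hτ | hτ
  · obtain ⟨j, h₂, h₆, hj⟩ := exists_middle_mem_vImg ⟨hσ, hτ⟩ hb₂
    exact ⟨middle j h₂ h₆, hu, hj⟩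
  · have hu' : -Λ < p.1 := by
      rcases hD with ⟨h, _⟩ | ⟨h, _⟩ | ⟨_, _, h⟩
      · linarith [h.1]
      · exact h.1
      · linarith
    obtain ⟨n, hn⟩ := exists_nat_mem_Ioo_mul (c := τ) (x := p.2 - Λ - τ) (by positivity)
      (by linarith) fun n e => hb₇ n (by linarith)
    exact ⟨sector7 n, ⟨hu', hu⟩, ⟨by linarith [hn.1], by linarith [hn.2]⟩⟩

end Piece

namespace Piece

def img (i : Piece) : Set (ℝ × ℝ) := (i.uImg ×ˢ i.vImg) ∩ Dgauss

def dom (i : Piece) : Set (ℝ × ℝ) := (i.uDom ×ˢ i.vDom) ∩ Ghat ⁻¹' i.img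

theorem bijOn_dom_img (i : Piece) : BijOn Ghat i.dom i.img :=
  (((bijOn_uDom i).prodMap (bijOn_vDom i)).congr (Ghat_eqOn i).symm).subset_right
    inter_subset_left

theorem bijOn_iUnion_dom_img : BijOn Ghat (⋃ i, dom i) (⋃ i, img i) :=
  bijOn_iUnion_of_pairwise_disjoint bijOn_dom_img fun _ _ hij =>
    ((pairwise_disjoint_vImg hij).preimage Prod.snd).mono (fun _ hp => hp.1.2) fun _ hp => hp.1.2

theorem iUnion_dom_subset : ⋃ i, dom i ⊆ Dgauss :=
  iUnion_subset fun i => inter_subset_left.trans (uDom_prod_vDom_subset i)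

theorem iUnion_img_subset : ⋃ i, img i ⊆ Dgauss :=
  iUnion_subset fun _ => inter_subset_right

theorem countable_uDom_inter_preimage (i : Piece) {K : Set ℝ} (hK : K.Countable) :
    (i.uDom ∩ i.map ⁻¹' K).Countable :=
  MapsTo.countable_of_injOn (f := i.map) (fun _ hx => hx.2)
    ((bijOn_uDom i).injOn.mono inter_subset_left) hK

theorem volume_Dgauss_diff_iUnion_dom : volume (Dgauss \ ⋃ i, dom i) = 0 := by
  have hB : (uBoundary ∪ ⋃ i : Piece, i.uDom ∩ i.map ⁻¹' {1, -Λ}).Countable :=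
    uBoundary_countable.union
      (countable_iUnion fun i => countable_uDom_inter_preimage i (toFinite _).countable)
  refine measure_mono_null (fun p ⟨hp, hpU⟩ => ?_) (volume_prod_univ_of_countable hB)
  rcases Dgauss_subset_iUnion_uDom_prod_vDom hp with hp' | ⟨hb, -⟩
  · obtain ⟨i, hi⟩ := mem_iUnion.1 hp'
    suffices hK : i.map p.1 ∈ ({1, -Λ} : Set ℝ) from
      ⟨Or.inr (mem_iUnion.2 ⟨i, hi.1, hK⟩), trivial⟩
    by_contra hK
    refine hpU (mem_iUnion.2 ⟨i, hi, ?_⟩)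
    change Ghat p ∈ (i.uImg ×ˢ i.vImg) ∩ Dgauss
    rw [Ghat_eqOn i hi]
    have hmaps : (i.map p.1, i.map p.2) ∈ i.uImg ×ˢ i.vImg :=
      ⟨(bijOn_uDom i).mapsTo hi.1, (bijOn_vDom i).mapsTo hi.2⟩
    exact ⟨hmaps, uImg_prod_vImg_subset i ⟨⟨hmaps.1, hK⟩, hmaps.2⟩⟩
  · exact ⟨Or.inl hb, trivial⟩

theorem volume_Dgauss_diff_iUnion_img : volume (Dgauss \ ⋃ i, img i) = 0 := by
  refine measure_mono_null (fun p ⟨hp, hpV⟩ => ?_)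
    (volume_univ_prod_of_countable vBoundary_countable)
  rcases Dgauss_subset_iUnion_uImg_prod_vImg hp with hp' | hb
  · obtain ⟨i, hi⟩ := mem_iUnion.1 hp'
    exact absurd (mem_iUnion.2 ⟨i, (⟨hi, hp⟩ : p ∈ (i.uImg ×ˢ i.vImg) ∩ Dgauss)⟩) hpV
  · exact hb

end Piece

/-- Up to null sets, the natural extension `Ĝ` of the octagon Gauss map is a bijection of
its domain `D` onto itself. -/
theorem Ghat_bijective_mod_null :
    ∃ N₁ N₂ : Set (ℝ × ℝ),
      N₁ ⊆ Dgauss ∧ N₂ ⊆ Dgauss ∧ volume N₁ = 0 ∧ volume N₂ = 0 ∧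
      Set.BijOn Ghat (Dgauss \ N₁) (Dgauss \ N₂) := by
  refine ⟨Dgauss \ ⋃ i, Piece.dom i, Dgauss \ ⋃ i, Piece.img i, sdiff_subset, sdiff_subset,
    Piece.volume_Dgauss_diff_iUnion_dom, Piece.volume_Dgauss_diff_iUnion_img, ?_⟩
  rw [sdiff_sdiff_cancel_left Piece.iUnion_dom_subset,
    sdiff_sdiff_cancel_left Piece.iUnion_img_subset]
  exact Piece.bijOn_iUnion_dom_img
end
end
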